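/- arXiv:1101.2951 — 9 statements merged into one kernel-verified Lean document; each statement's English description precedes it below -/
import Mathlib

section
/- Let p be an odd prime and u an integer with Legendre symbol (−u | p) = −1. Let n be an integer with p ∤ n. Then for every integer t ≥ 1, the number of triples (x,y,z) ∈ (ℤ/p^tℤ)³ with u·x² + p·y² + p·u·z² = n equals p^{2t}·(1 − (−n | p)). -/
/-!
Modulo `p` the equation reads `u x² ≡ n`, so a solution forces `u n` to be a square mod `p`,
which (as `(-u | p) = -1`) happens iff `(-n | p) = -1`. For fixed `y, z` the equation is
`(u x)² = u (n - p y² - p u z²)`, whose right side is `≡ u n` mod `p`; a unit that is a square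
mod `p` lifts by Hensel to a square mod `p^t` with exactly the two roots `±r`. Each of the
`p^(2t)` fibres over `(y, z)` thus has `1 + (u n | p) = 1 - (-n | p)` points.
-/

/-- The number of solutions `(x,y,z)` in `ℤ/p^tℤ` of
`u x² + p y² + p u z² = n`. -/
noncomputable def cnt (p t : ℕ) (u n : ℤ) : ℕ :=
  Nat.card {v : ZMod (p ^ t) × ZMod (p ^ t) × ZMod (p ^ t) |
    (u : ZMod (p ^ t)) * v.1 ^ 2 + (p : ZMod (p ^ t)) * v.2.1 ^ 2 +
      (p : ZMod (p ^ t)) * (u : ZMod (p ^ t)) * v.2.2 ^ 2 = (n : ZMod (p ^ t))}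

theorem Int.exists_sq_sub_dvd_pow_succ {p a x₀ : ℤ} (hp : Prime p) (hp2 : ¬ p ∣ 2)
    (ha : ¬ p ∣ a) (hx₀ : p ∣ x₀ ^ 2 - a) (k : ℕ) : ∃ x : ℤ, p ^ (k + 1) ∣ x ^ 2 - a := by
  induction k with
  | zero => exact ⟨x₀, by simpa using hx₀⟩
  | succ k ih =>
    obtain ⟨x, m, hm⟩ := ih
    have hx : ¬ p ∣ x := fun hpx => ha <| by
      have : p ∣ x ^ 2 - a := (dvd_pow_self p k.succ_ne_zero).trans ⟨m, hm⟩
      simpa using (dvd_pow hpx two_ne_zero).sub this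
    obtain ⟨s, r, hsr⟩ : IsCoprime (2 * x) p :=
      (hp.coprime_iff_not_dvd.2 fun h => (hp.dvd_or_dvd h).elim hp2 hx).symm
    -- the Newton step `x ↦ x - (x² - a) / (2x)`, with `s` inverting `2x` modulo `p`
    exact ⟨x - p ^ (k + 1) * m * s, m * r + p ^ k * m ^ 2 * s ^ 2,
      by linear_combination hm - p ^ (k + 1) * m * hsr⟩

theorem Nat.card_subtype_prod_eq_sum {α β : Type*} [Finite α] [Fintype β] (P : α → β → Prop) :
    Nat.card {v : α × β // P v.1 v.2} = ∑ b, Nat.card {a // P a b} := by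
  rw [← Nat.card_sigma]
  exact Nat.card_congr (((Equiv.prodComm α β).subtypeEquiv fun _ => Iff.rfl).trans
    (Equiv.subtypeProdEquivSigmaSubtype fun b a => P a b))

namespace ZMod

variable {p : ℕ} [Fact p.Prime]

theorem isSquare_intCast_pow_of_isSquare (hp : p ≠ 2) {a : ℤ} (ha : (a : ZMod p) ≠ 0)
    (hsq : IsSquare (a : ZMod p)) (t : ℕ) : IsSquare (a : ZMod (p ^ t)) := by
  have hpZ : Prime (p : ℤ) := Nat.prime_iff_prime_int.mp Fact.out
  have hp2 : ¬ (p : ℤ) ∣ 2 := fun h =>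
    hp <| (Nat.prime_dvd_prime_iff_eq Fact.out Nat.prime_two).mp (by exact_mod_cast h)
  obtain ⟨s, hs⟩ := hsq
  obtain ⟨x₀, rfl⟩ := intCast_surjective s
  have hx₀ : (p : ℤ) ∣ x₀ ^ 2 - a := by
    rw [← intCast_eq_intCast_iff_dvd_sub, hs]; push_cast; ring
  obtain ⟨x, hx⟩ := Int.exists_sq_sub_dvd_pow_succ hpZ hp2
    (mt (intCast_zmod_eq_zero_iff_dvd a p).mpr ha) hx₀ t
  refine ⟨x, ?_⟩
  rw [← sq]
  exact_mod_cast (intCast_eq_intCast_iff_dvd_sub _ _ _).mpr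
    (by exact_mod_cast (pow_dvd_pow (p : ℤ) t.le_succ).trans hx)

theorem isUnit_iff_castHom_ne_zero {t : ℕ} (ht : t ≠ 0) (x : ZMod (p ^ t)) :
    IsUnit x ↔ castHom (dvd_pow_self p ht) (ZMod p) x ≠ 0 := by
  have : NeZero (p ^ t) := ⟨pow_ne_zero t (Fact.out : p.Prime).ne_zero⟩
  obtain ⟨k, rfl⟩ := natCast_zmod_surjective x
  rw [isUnit_natCast_iff_not_dvd_pow Fact.out (Nat.pos_of_ne_zero ht), map_natCast, Ne,
    natCast_eq_zero_iff]

theorem isUnit_two_mul_of_castHom_ne_zero (hp : p ≠ 2) {t : ℕ} (ht : t ≠ 0) {r : ZMod (p ^ t)}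
    (hr : castHom (dvd_pow_self p ht) (ZMod p) r ≠ 0) : IsUnit (2 * r) := by
  rw [isUnit_iff_castHom_ne_zero ht, map_mul, map_ofNat]
  exact mul_ne_zero (Ring.two_ne_zero (by rwa [ringChar_zmod_n])) hr

theorem sq_eq_sq_iff_of_isUnit_two_mul {t : ℕ} (ht : t ≠ 0) {x r : ZMod (p ^ t)}
    (hr : IsUnit (2 * r)) : x ^ 2 = r ^ 2 ↔ x = r ∨ x = -r := by
  refine ⟨fun h => ?_, by rintro (rfl | rfl) <;> ring⟩
  have hprod : (x - r) * (x + r) = 0 := by linear_combination h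
  by_cases hsub : IsUnit (x - r)
  · exact .inr (eq_neg_of_add_eq_zero_left (hsub.mul_right_eq_zero.mp hprod))
  · -- `(x + r) - (x - r) = 2r` is a unit, so `x - r` and `x + r` are not both in the kernel
    have hadd : IsUnit (x + r) := by
      rw [isUnit_iff_castHom_ne_zero ht, not_not] at hsub
      rw [isUnit_iff_castHom_ne_zero ht] at hr ⊢
      rwa [show x + r = (x - r) + 2 * r by ring, map_add, hsub, zero_add]
    exact .inl (sub_eq_zero.mp (hadd.mul_left_eq_zero.mp hprod))

theorem card_sq_eq_intCast (hp : p ≠ 2) {t : ℕ} (ht : t ≠ 0) {a : ℤ} (ha : (a : ZMod p) ≠ 0) :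
    (Nat.card {x : ZMod (p ^ t) // x ^ 2 = a} : ℤ) = legendreSym p a + 1 := by
  set φ := castHom (dvd_pow_self p ht) (ZMod p)
  rcases legendreSym.eq_one_or_neg_one p ha with hL | hL
  · obtain ⟨r, hr⟩ := isSquare_intCast_pow_of_isSquare hp ha ((legendreSym.eq_one_iff p ha).mp hL) t
    have hφr : φ r ≠ 0 := fun h0 => ha <| by rw [← map_intCast φ, hr, map_mul, h0, zero_mul]
    have h2r := isUnit_two_mul_of_castHom_ne_zero hp ht hφr
    have hne : r ≠ -r := fun h => (isUnit_iff_castHom_ne_zero ht _).mp h2r <| by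
      rw [show 2 * r = 0 by linear_combination h, map_zero]
    have hset : {x : ZMod (p ^ t) // x ^ 2 = a} ≃ ({r, -r} : Finset _) :=
      Equiv.subtypeEquivRight fun x => by
        rw [hr, ← sq, sq_eq_sq_iff_of_isUnit_two_mul ht h2r]; simp
    rw [Nat.card_congr hset, Nat.card_eq_fintype_card, Fintype.card_coe,
      Finset.card_pair hne, hL]; rfl
  · have : IsEmpty {x : ZMod (p ^ t) // x ^ 2 = a} := ⟨fun ⟨x, hx⟩ =>
      (legendreSym.eq_neg_one_iff p).mp hL ⟨φ x, by rw [← sq, ← map_pow, hx, map_intCast]⟩⟩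
    rw [Nat.card_of_isEmpty, hL]; rfl

theorem card_mul_sq_add_eq (hp : p ≠ 2) {t : ℕ} (ht : t ≠ 0) {u n : ℤ} (hu : legendreSym p (-u) = -1)
    (hn : ¬ (p : ℤ) ∣ n) (y z : ZMod (p ^ t)) :
    (Nat.card {x : ZMod (p ^ t) // u * x ^ 2 + p * y ^ 2 + p * u * z ^ 2 = n} : ℤ) =
      1 - legendreSym p (-n) := by
  obtain ⟨y, rfl⟩ := intCast_surjective y
  obtain ⟨z, rfl⟩ := intCast_surjective z
  have hu0 : (u : ZMod p) ≠ 0 := fun h => by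
    rw [(legendreSym.eq_zero_iff p (-u)).mpr (by push_cast; rw [h, neg_zero])] at hu
    exact absurd hu (by decide)
  have hn0 : (n : ZMod p) ≠ 0 := mt (intCast_zmod_eq_zero_iff_dvd n p).mp hn
  have hU : IsUnit (u : ZMod (p ^ t)) := by
    rwa [isUnit_iff_castHom_ne_zero ht, map_intCast]
  set a : ℤ := u * (n - p * y ^ 2 - p * u * z ^ 2)
  have ha : (a : ZMod p) = u * n := by simp [a]
  have e : {x : ZMod (p ^ t) // u * x ^ 2 + p * y ^ 2 + p * u * z ^ 2 = n} ≃
      {w : ZMod (p ^ t) // w ^ 2 = a} :=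
    (Units.mulLeft hU.unit).subtypeEquiv fun x => by
      have key : (u * x) ^ 2 - (a : ZMod (p ^ t)) =
          u * (u * x ^ 2 + p * y ^ 2 + p * u * z ^ 2 - n) := by
        push_cast [a]; ring
      rw [Units.mulLeft_apply, IsUnit.unit_spec, ← sub_eq_zero (a := (_ * x) ^ 2), key,
        hU.mul_right_eq_zero, sub_eq_zero]
  have hL : legendreSym p a = legendreSym p (-u * -n) := by
    simp only [legendreSym, ha, Int.cast_mul, neg_mul_neg]
  rw [Nat.card_congr e, card_sq_eq_intCast hp ht (by rw [ha]; exact mul_ne_zero hu0 hn0), hL,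
    legendreSym.mul, hu]
  ring

end ZMod

theorem local_count_unit (p : ℕ) [Fact p.Prime] (hp : p ≠ 2) (u : ℤ)
    (hu : legendreSym p (-u) = -1) (n : ℤ) (hn : ¬ ((p : ℤ) ∣ n))
    (t : ℕ) (ht : 1 ≤ t) :
    (cnt p t u n : ℤ) = (p : ℤ) ^ (2 * t) * (1 - legendreSym p (-n)) := by
  have hfibers : cnt p t u n = ∑ yz : ZMod (p ^ t) × ZMod (p ^ t),
      Nat.card {x : ZMod (p ^ t) // u * x ^ 2 + p * yz.1 ^ 2 + p * u * yz.2 ^ 2 = n} :=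
    Nat.card_subtype_prod_eq_sum fun x (yz : ZMod (p ^ t) × ZMod (p ^ t)) =>
      u * x ^ 2 + p * yz.1 ^ 2 + p * u * yz.2 ^ 2 = n
  rw [hfibers, Nat.cast_sum, Finset.sum_congr rfl fun yz _ =>
    ZMod.card_mul_sq_add_eq hp (by omega) hu hn yz.1 yz.2, Finset.sum_const, Finset.card_univ,
    Fintype.card_prod, ZMod.card]
  ring
end

section
/- Let p be an odd prime and u an integer with Legendre symbol (−u | p) = −1. Let n = p·m with m an integer not divisible by p. Then for every integer t ≥ 2, the number of triples (x,y,z) ∈ (ℤ/p^tℤ)³ with u·x² + p·y² + p·u·z² = n equals p^{2t} + p^{2t−1}. -/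
/-!
As `u` is a unit mod `p`, every solution has `p ∣ x`, and writing `x = p x'` turns the equation
modulo `p^(s+1)` into `p u x'² + y² + u z² = m` modulo `p^s`, the top digits of `y` and `z` being
free: the count is `p²` times the number `N_s` of solutions of this reduced equation mod `p^s`.
Modulo `p` the reduced equation is the conic `y² + u z² = m`, which has `p - (-u | p)` points
(a Jacobi sum computation), so `N_1 = p (p - (-u | p))`. The gradient `(2y, 2uz)` does not vanish
on the conic, so each solution modulo `p^s` (`s ≥ 1`) lifts to exactly `p²` solutions modulo
`p^(s+1)`, and `N_s = p^(2s-1) (p - (-u | p))`.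
-/

open Finset

namespace ZMod

variable {d q N : ℕ} [NeZero d] [NeZero q]

/-- Writing `x = x₀ + d x₁` with `0 ≤ x₀ < d`. -/
def digitEquiv (h : d * q = N) : ZMod d × ZMod q ≃ ZMod N where
  toFun w := ((w.1.val + d * w.2.val : ℕ) : ZMod N)
  invFun x := (x.val, (x.val / d : ℕ))
  left_inv w := by
    subst h
    have hlt : w.1.val + d * w.2.val < d * q := by nlinarith [w.1.val_lt, w.2.val_lt]
    have hdiv : (w.1.val + d * w.2.val) / d = w.2.val := by
      rw [Nat.add_mul_div_left _ _ (NeZero.pos d), Nat.div_eq_of_lt w.1.val_lt, zero_add]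
    ext <;> dsimp only <;> rw [val_natCast_of_lt hlt]
    · rw [Nat.cast_add, Nat.cast_mul, natCast_self, zero_mul, add_zero, natCast_zmod_val]
    · rw [hdiv, natCast_zmod_val]
  right_inv x := by
    subst h
    dsimp only
    rw [val_natCast, val_natCast_of_lt (Nat.div_lt_of_lt_mul x.val_lt), Nat.mod_add_div,
      natCast_zmod_val]

lemma digitEquiv_apply (h : d * q = N) (w : ZMod d × ZMod q) :
    digitEquiv h w = (w.1.val : ZMod N) + d * (w.2.val : ZMod N) := by
  simp only [digitEquiv, Equiv.coe_fn_mk, Nat.cast_add, Nat.cast_mul]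

lemma castHom_digitEquiv (h : d * q = N) (hd : d ∣ N) (w : ZMod d × ZMod q) :
    castHom hd (ZMod d) (digitEquiv h w) = w.1 := by
  subst h
  rw [digitEquiv_apply, map_add, map_mul, map_natCast, map_natCast, map_natCast, natCast_self,
    zero_mul, add_zero, natCast_zmod_val]

lemma exists_eq_natCast_mul (h : d * q = N) (hd : d ∣ N) {x : ZMod N}
    (hx : castHom hd (ZMod d) x = 0) : ∃ e : ZMod q, x = d * (e.val : ZMod N) := by
  refine ⟨((digitEquiv h).symm x).2, ?_⟩
  have hfst := castHom_digitEquiv h hd ((digitEquiv h).symm x)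
  rw [Equiv.apply_symm_apply, hx] at hfst
  conv_lhs => rw [← (digitEquiv h).apply_symm_apply x]
  rw [digitEquiv_apply, ← hfst, val_zero, Nat.cast_zero, zero_add]

lemma natCast_mul_eq_natCast_mul_iff (h : d * q = N) (hq : q ∣ N) (a b : ZMod N) :
    (d : ZMod N) * a = d * b ↔ castHom hq (ZMod q) a = castHom hq (ZMod q) b := by
  subst h
  rw [← natCast_zmod_val a, ← natCast_zmod_val b, map_natCast, map_natCast, ← Nat.cast_mul,
    ← Nat.cast_mul, natCast_eq_natCast_iff, natCast_eq_natCast_iff]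
  exact Nat.ModEq.mul_left_cancel_iff' (NeZero.ne d)

end ZMod

section Product

variable {α β : Type*} [Fintype α] [Fintype β]

lemma card_filter_fst (P : α → Prop) [DecidablePred P] :
    #{v : α × β | P v.1} = #{a | P a} * Fintype.card β := by
  rw [← univ_product_univ, filter_product_left, card_product, card_univ]

lemma card_filter_snd (P : β → Prop) [DecidablePred P] :
    #{v : α × β | P v.2} = Fintype.card α * #{b | P b} := by
  rw [← univ_product_univ, filter_product_right, card_product, card_univ]

lemma card_filter_fst_eq_and [DecidableEq α] (a : α) (P : β → Prop) [DecidablePred P] :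
    #{v : α × β | v.1 = a ∧ P v.2} = #{b | P b} := by
  rw [← univ_product_univ, filter_product (p := (· = a)) (q := P), filter_eq', card_product,
    if_pos (mem_univ a), card_singleton, one_mul]

end Product

section FiniteField

variable {F : Type*} [Field F] [Fintype F] [DecidableEq F]

lemma sum_comp_sq_eq_sum_quadraticChar (hF : ringChar F ≠ 2) (f : F → ℤ) :
    ∑ z, f (z ^ 2) = ∑ w, (quadraticChar F w + 1) * f w := by
  rw [← sum_fiberwise univ (fun z => z ^ 2)]
  refine sum_congr rfl fun w _ => ?_
  rw [sum_congr rfl fun z hz => congrArg f (mem_filter.mp hz).2, sum_const, nsmul_eq_mul,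
    ← quadraticChar_card_sqrts hF w, Set.toFinset_ofPred]

lemma sum_quadraticChar_mul_sub_mul (hF : ringChar F ≠ 2) {u c : F} (hu : u ≠ 0) (hc : c ≠ 0) :
    ∑ w, quadraticChar F w * quadraticChar F (c - u * w) = -quadraticChar F (-u) := by
  set χ := quadraticChar F
  have hχ : χ (c / u * c) = χ u := by
    rw [show c / u * c = u * (c / u) ^ 2 by field_simp, map_mul,
      quadraticChar_sq_one' (div_ne_zero hc hu), mul_one]
  calc ∑ w, χ w * χ (c - u * w)
      = ∑ x, χ (c / u * x) * χ (c - u * (c / u * x)) :=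
        (Equiv.sum_comp (Equiv.mulLeft₀ (c / u) (div_ne_zero hc hu)) _).symm
    _ = ∑ x, χ u * (χ x * χ⁻¹ (1 - x)) := by
        refine sum_congr rfl fun x _ => ?_
        rw [(quadraticChar_isQuadratic F).inv, ← hχ,
          show c - u * (c / u * x) = c * (1 - x) by field_simp]
        simp only [map_mul]
        ring
    _ = -χ (-u) := by
        rw [← mul_sum, ← jacobiSum, jacobiSum_nontrivial_inv (quadraticChar_ne_one hF),
          ← neg_one_mul u, map_mul]
        ring

lemma card_sq_add_mul_sq (hF : ringChar F ≠ 2) {u c : F} (hu : u ≠ 0) (hc : c ≠ 0) :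
    (#{v : F × F | v.1 ^ 2 + u * v.2 ^ 2 = c} : ℤ) = Fintype.card F - quadraticChar F (-u) := by
  have hfiber (z : F) : ∑ y : F, (if y ^ 2 + u * z ^ 2 = c then 1 else 0 : ℤ) =
      quadraticChar F (c - u * z ^ 2) + 1 := by
    rw [sum_comp_sq_eq_sum_quadraticChar hF (fun w => if w + u * z ^ 2 = c then 1 else 0)]
    simp only [← eq_sub_iff_add_eq, mul_ite, mul_one, mul_zero, sum_ite_eq', mem_univ, if_true]
  have hshift : ∑ w, quadraticChar F (c - u * w) = 0 :=
    (Equiv.sum_comp ((Equiv.mulLeft₀ u hu).trans (Equiv.subLeft c)) _).trans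
      (quadraticChar_sum_zero hF)
  rw [card_filter, Nat.cast_sum, Fintype.sum_prod_type_right]
  push_cast
  rw [sum_congr rfl fun z _ => hfiber z,
    sum_comp_sq_eq_sum_quadraticChar hF (fun w => quadraticChar F (c - u * w) + 1)]
  simp only [mul_add, add_mul, one_mul, mul_one, sum_add_distrib, hshift,
    quadraticChar_sum_zero hF, sum_quadraticChar_mul_sub_mul hF hu hc, sum_const, card_univ,
    nsmul_eq_mul]
  ring

lemma card_mul_add_mul_eq {α β : F} (h : α ≠ 0 ∨ β ≠ 0) (e : F) :
    #{v : F × F | α * v.1 + β * v.2 = e} = Fintype.card F := by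
  wlog hβ : β ≠ 0 generalizing α β
  · rw [← this h.symm (h.resolve_right hβ)]
    exact card_equiv (Equiv.prodComm F F) (by simp [add_comm])
  have hunique (a : F) : ∑ b : F, (if α * a + β * b = e then 1 else 0) = 1 := by
    simp only [← eq_sub_iff_add_eq', ← eq_inv_mul_iff_mul_eq₀ hβ, sum_ite_eq', mem_univ, if_true]
  rw [card_filter, Fintype.sum_prod_type]
  simp only [hunique, sum_const, card_univ, smul_eq_mul, mul_one]

end FiniteField

namespace LocalCount

section ReducedForm

variable {R S : Type*} [CommRing R] [CommRing S] (p : ℕ) (u : ℤ)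

variable (R) in
def reducedForm (v : R × R × R) : R := p * u * v.1 ^ 2 + v.2.1 ^ 2 + u * v.2.2 ^ 2

variable (R) in
def reducedCount [Fintype R] [DecidableEq R] (m : ℤ) : ℕ :=
  #{v : R × R × R | reducedForm R p u v = m}

lemma map_reducedForm {G : Type*} [FunLike G R S] [RingHomClass G R S] (f : G) (v : R × R × R) :
    f (reducedForm R p u v) = reducedForm S p u (f v.1, f v.2.1, f v.2.2) := by
  simp only [reducedForm, map_add, map_mul, map_pow, map_natCast, map_intCast]

lemma reducedCount_congr [Fintype R] [DecidableEq R] [Fintype S] [DecidableEq S] (e : R ≃+* S)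
    (m : ℤ) : reducedCount R p u m = reducedCount S p u m := by
  refine card_equiv (e.toEquiv.prodCongr (e.toEquiv.prodCongr e.toEquiv)) fun v => ?_
  simp only [mem_filter_univ]
  rw [← e.injective.eq_iff, map_reducedForm, map_intCast]
  rfl

end ReducedForm

variable {p s : ℕ}

/-- `(w, k) ↦ w + p^s k`, coordinatewise. -/
def liftEquiv (p s : ℕ) [NeZero p] :
    (ZMod (p ^ s) × ZMod (p ^ s) × ZMod (p ^ s)) × (ZMod p × ZMod p × ZMod p) ≃
      ZMod (p ^ (s + 1)) × ZMod (p ^ (s + 1)) × ZMod (p ^ (s + 1)) :=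
  let e := ZMod.digitEquiv (pow_succ p s).symm
  (Equiv.prodProdProdComm _ _ _ _).trans
    (e.prodCongr ((Equiv.prodProdProdComm _ _ _ _).trans (e.prodCongr e)))

lemma liftEquiv_apply [NeZero p] (w : ZMod (p ^ s) × ZMod (p ^ s) × ZMod (p ^ s))
    (k : ZMod p × ZMod p × ZMod p) :
    liftEquiv p s (w, k) = (ZMod.digitEquiv (pow_succ p s).symm (w.1, k.1),
      ZMod.digitEquiv (pow_succ p s).symm (w.2.1, k.2.1),
      ZMod.digitEquiv (pow_succ p s).symm (w.2.2, k.2.2)) := rfl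

lemma castHom_reducedForm_liftEquiv [NeZero p] (u : ℤ)
    (w : ZMod (p ^ s) × ZMod (p ^ s) × ZMod (p ^ s)) (k : ZMod p × ZMod p × ZMod p) :
    ZMod.castHom (pow_dvd_pow p s.le_succ) _ (reducedForm _ p u (liftEquiv p s (w, k))) =
      reducedForm _ p u w := by
  rw [map_reducedForm, liftEquiv_apply]
  simp only [ZMod.castHom_digitEquiv]

/-- `(x₀, (x₁, y, z), (b, c)) ↦ (x₀ + p x₁, y + p^s b, z + p^s c)`. -/
def reductionEquiv (p s : ℕ) [NeZero p] :
    ZMod p × (ZMod (p ^ s) × ZMod (p ^ s) × ZMod (p ^ s)) × (ZMod p × ZMod p) ≃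
      ZMod (p ^ (s + 1)) × ZMod (p ^ (s + 1)) × ZMod (p ^ (s + 1)) :=
  ({ toFun v := ((v.1, v.2.1.1), (v.2.1.2.1, v.2.2.1), (v.2.1.2.2, v.2.2.2))
     invFun w := (w.1.1, (w.1.2, w.2.1.1, w.2.2.1), (w.2.1.2, w.2.2.2))
     left_inv _ := rfl
     right_inv _ := rfl } :
      _ ≃ (ZMod p × ZMod (p ^ s)) × (ZMod (p ^ s) × ZMod p) × (ZMod (p ^ s) × ZMod p)).trans
    ((ZMod.digitEquiv (pow_succ' p s).symm).prodCongr
      ((ZMod.digitEquiv (pow_succ p s).symm).prodCongr (ZMod.digitEquiv (pow_succ p s).symm)))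

lemma reductionEquiv_apply [NeZero p]
    (v : ZMod p × (ZMod (p ^ s) × ZMod (p ^ s) × ZMod (p ^ s)) × (ZMod p × ZMod p)) :
    reductionEquiv p s v = (ZMod.digitEquiv (pow_succ' p s).symm (v.1, v.2.1.1),
      ZMod.digitEquiv (pow_succ p s).symm (v.2.1.2.1, v.2.2.1),
      ZMod.digitEquiv (pow_succ p s).symm (v.2.1.2.2, v.2.2.2)) := rfl

variable [Fact p.Prime]

lemma reducedCount_zmod (hp : p ≠ 2) {u m : ℤ} (hu : (u : ZMod p) ≠ 0)
    (hm : (m : ZMod p) ≠ 0) :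
    (reducedCount (ZMod p) p u m : ℤ) = p * (p - legendreSym p (-u)) := by
  have hF : ringChar (ZMod p) ≠ 2 := by rwa [ZMod.ringChar_zmod_n]
  rw [reducedCount]
  simp only [reducedForm, ZMod.natCast_self, zero_mul, zero_add]
  rw [card_filter_snd (fun w : ZMod p × ZMod p => w.1 ^ 2 + (u : ZMod p) * w.2 ^ 2 = m),
    Nat.cast_mul, card_sq_add_mul_sq hF hu hm, ZMod.card, legendreSym, Int.cast_neg]

lemma exists_forall_reducedForm_liftEquiv_eq_iff (hs : 1 ≤ s) {u m : ℤ}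
    {w : ZMod (p ^ s) × ZMod (p ^ s) × ZMod (p ^ s)} (hw : reducedForm _ p u w = m) :
    ∃ e : ZMod p, ∀ k : ZMod p × ZMod p × ZMod p,
      reducedForm _ p u (liftEquiv p s (w, k)) = m ↔
        2 * (w.2.1.val : ZMod p) * k.2.1 + 2 * u * (w.2.2.val : ZMod p) * k.2.2 = e := by
  have hP : (p : ZMod (p ^ (s + 1))) * (p ^ s : ℕ) = 0 := by
    rw [← Nat.cast_mul, ZMod.natCast_eq_zero_iff, pow_succ']
  have hPP : ((p ^ s : ℕ) : ZMod (p ^ (s + 1))) * (p ^ s : ℕ) = 0 := by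
    rw [← Nat.cast_mul, ZMod.natCast_eq_zero_iff, ← pow_add]
    exact pow_dvd_pow p (by omega)
  have hexpand (k : ZMod p × ZMod p × ZMod p) : reducedForm _ p u (liftEquiv p s (w, k)) =
      reducedForm _ p u (liftEquiv p s (w, 0)) + (p ^ s : ℕ) *
        (2 * (w.2.1.val : ZMod (p ^ (s + 1))) * k.2.1.val
          + 2 * u * (w.2.2.val : ZMod (p ^ (s + 1))) * k.2.2.val) := by
    simp only [liftEquiv_apply, ZMod.digitEquiv_apply, reducedForm, Prod.fst_zero, Prod.snd_zero,
      ZMod.val_zero, Nat.cast_zero, mul_zero, add_zero]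
    linear_combination (2 * u * (w.1.val : ZMod (p ^ (s + 1))) * k.1.val
        + u * (p ^ s : ℕ) * (k.1.val : ZMod (p ^ (s + 1))) ^ 2) * hP
      + ((k.2.1.val : ZMod (p ^ (s + 1))) ^ 2 + u * (k.2.2.val : ZMod (p ^ (s + 1))) ^ 2) * hPP
  obtain ⟨e, he⟩ := ZMod.exists_eq_natCast_mul (pow_succ p s).symm (pow_dvd_pow p s.le_succ)
    (x := m - reducedForm _ p u (liftEquiv p s (w, 0)))
    (by rw [map_sub, map_intCast, castHom_reducedForm_liftEquiv, hw, sub_self])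
  refine ⟨e, fun k => ?_⟩
  rw [hexpand, ← eq_sub_iff_add_eq', he,
    ZMod.natCast_mul_eq_natCast_mul_iff (pow_succ p s).symm (dvd_pow_self p (by omega))]
  simp only [map_add, map_mul, map_natCast, map_ofNat, map_intCast, ZMod.natCast_zmod_val]

lemma reducedCount_succ (hp : p ≠ 2) (hs : 1 ≤ s) {u m : ℤ} (hu : (u : ZMod p) ≠ 0)
    (hm : (m : ZMod p) ≠ 0) :
    reducedCount (ZMod (p ^ (s + 1))) p u m = p ^ 2 * reducedCount (ZMod (p ^ s)) p u m := by
  have hfiber (w : ZMod (p ^ s) × ZMod (p ^ s) × ZMod (p ^ s)) :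
      #{k : ZMod p × ZMod p × ZMod p | reducedForm _ p u (liftEquiv p s (w, k)) = m} =
        if reducedForm _ p u w = m then p ^ 2 else 0 := by
    split_ifs with hw
    · obtain ⟨e, he⟩ := exists_forall_reducedForm_liftEquiv_eq_iff hs hw
      have hmod := congrArg (ZMod.castHom (dvd_pow_self p (by omega : s ≠ 0)) (ZMod p)) hw
      rw [map_reducedForm, map_intCast] at hmod
      simp only [reducedForm, ZMod.natCast_self, zero_mul, zero_add, ZMod.castHom_apply,
        ZMod.cast_eq_val] at hmod
      have hgrad : 2 * (w.2.1.val : ZMod p) ≠ 0 ∨ 2 * u * (w.2.2.val : ZMod p) ≠ 0 := by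
        have h2 : (2 : ZMod p) ≠ 0 := Ring.two_ne_zero (by rwa [ZMod.ringChar_zmod_n])
        by_contra! h
        simp only [mul_eq_zero, h2, hu, false_or] at h
        rw [h.1, h.2] at hmod
        exact hm (by simpa using hmod.symm)
      simp only [he]
      rw [card_filter_snd (fun k : ZMod p × ZMod p => _ * k.1 + _ * k.2 = e),
        card_mul_add_mul_eq hgrad, ZMod.card, sq]
    · rw [card_eq_zero, filter_eq_empty_iff]
      intro k _ h
      exact hw (by rw [← castHom_reducedForm_liftEquiv u w k, h, map_intCast])
  have hlift : reducedCount (ZMod (p ^ (s + 1))) p u m =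
      #{x | reducedForm _ p u (liftEquiv p s x) = m} :=
    (card_equiv (liftEquiv p s) fun _ => by simp only [mem_filter_univ]).symm
  rw [hlift, reducedCount, card_filter, Fintype.sum_prod_type]
  simp only [← card_filter, hfiber]
  rw [← sum_filter, sum_const, smul_eq_mul, mul_comm]

lemma reducedCount_pow_succ (hp : p ≠ 2) {u m : ℤ} (hu : (u : ZMod p) ≠ 0)
    (hm : (m : ZMod p) ≠ 0) (s : ℕ) :
    (reducedCount (ZMod (p ^ (s + 1))) p u m : ℤ) =
      p ^ (2 * s + 1) * (p - legendreSym p (-u)) := by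
  induction s with
  | zero =>
    rw [show reducedCount (ZMod (p ^ (0 + 1))) p u m = reducedCount (ZMod p) p u m from
      reducedCount_congr p u (ZMod.ringEquivCongr (pow_one p)) m, reducedCount_zmod hp hu hm]
    ring
  | succ s ih =>
    rw [reducedCount_succ hp (by omega) hu hm, Nat.cast_mul, ih]
    push_cast
    ring

lemma reductionEquiv_mem_iff {u : ℤ} (hu : (u : ZMod p) ≠ 0) (m : ℤ)
    (v : ZMod p × (ZMod (p ^ s) × ZMod (p ^ s) × ZMod (p ^ s)) × (ZMod p × ZMod p)) :
    (u : ZMod (p ^ (s + 1))) * (reductionEquiv p s v).1 ^ 2 + p * (reductionEquiv p s v).2.1 ^ 2 +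
        p * u * (reductionEquiv p s v).2.2 ^ 2 = p * m ↔
      v.1 = 0 ∧ reducedForm _ p u v.2.1 = m := by
  obtain ⟨x₀, ⟨x₁, y₀, z₀⟩, b, c⟩ := v
  set X := reductionEquiv p s (x₀, (x₁, y₀, z₀), b, c)
  have hx₀ : (u : ZMod (p ^ (s + 1))) * X.1 ^ 2 + p * X.2.1 ^ 2 + p * u * X.2.2 ^ 2 = p * m →
      x₀ = 0 := by
    intro h
    have hmod := congrArg (ZMod.castHom (dvd_pow_self p s.succ_ne_zero) (ZMod p)) h
    simp only [map_add, map_mul, map_pow, map_natCast, map_intCast, ZMod.natCast_self, X,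
      reductionEquiv_apply, ZMod.castHom_digitEquiv, zero_mul, add_zero] at hmod
    simpa [hu] using hmod
  suffices x₀ = 0 → ((u : ZMod (p ^ (s + 1))) * X.1 ^ 2 + p * X.2.1 ^ 2 + p * u * X.2.2 ^ 2 =
      p * m ↔ reducedForm _ p u (x₁, y₀, z₀) = m) from
    ⟨fun h => ⟨hx₀ h, (this (hx₀ h)).1 h⟩, fun h => (this h.1).2 h.2⟩
  rintro rfl
  have hP : (p : ZMod (p ^ (s + 1))) * (p ^ s : ℕ) = 0 := by
    rw [← Nat.cast_mul, ZMod.natCast_eq_zero_iff, pow_succ']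
  have hexpand : (u : ZMod (p ^ (s + 1))) * X.1 ^ 2 + p * X.2.1 ^ 2 + p * u * X.2.2 ^ 2 =
      p * reducedForm _ p u ((x₁.val : ZMod (p ^ (s + 1))), (y₀.val : ZMod (p ^ (s + 1))),
        (z₀.val : ZMod (p ^ (s + 1)))) := by
    simp only [X, reductionEquiv_apply, ZMod.digitEquiv_apply, reducedForm, ZMod.val_zero,
      Nat.cast_zero, zero_add]
    linear_combination ((2 * y₀.val * b.val + u * 2 * z₀.val * c.val : ZMod (p ^ (s + 1)))
      + (p ^ s : ℕ) * (b.val ^ 2 + u * c.val ^ 2 : ZMod (p ^ (s + 1)))) * hP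
  rw [hexpand, ZMod.natCast_mul_eq_natCast_mul_iff (pow_succ' p s).symm (pow_dvd_pow p s.le_succ),
    map_reducedForm, map_intCast]
  simp only [map_natCast, ZMod.natCast_zmod_val]

lemma cnt_succ {u : ℤ} (hu : (u : ZMod p) ≠ 0) (m : ℤ) :
    cnt p (s + 1) u (p * m) = p ^ 2 * reducedCount (ZMod (p ^ s)) p u m := by
  have hcnt : cnt p (s + 1) u (p * m) =
      Nat.card {v : ZMod p × (ZMod (p ^ s) × ZMod (p ^ s) × ZMod (p ^ s)) × (ZMod p × ZMod p) //
        v.1 = 0 ∧ reducedForm _ p u v.2.1 = m} := by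
    refine Nat.card_congr ((reductionEquiv p s).subtypeEquiv fun v => ?_).symm
    rw [← reductionEquiv_mem_iff hu m v, Set.mem_ofPred_eq]
    push_cast
    rfl
  rw [hcnt, Nat.card_eq_fintype_card, Fintype.card_subtype,
    card_filter_fst_eq_and (0 : ZMod p)
      (fun t : (ZMod (p ^ s) × ZMod (p ^ s) × ZMod (p ^ s)) × (ZMod p × ZMod p) =>
        reducedForm _ p u t.1 = m),
    card_filter_fst (fun w : ZMod (p ^ s) × ZMod (p ^ s) × ZMod (p ^ s) =>
      reducedForm _ p u w = m),
    Fintype.card_prod, ZMod.card, reducedCount, sq, mul_comm]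

end LocalCount

theorem local_count_p_times_unit (p : ℕ) [Fact p.Prime] (hp : p ≠ 2) (u : ℤ)
    (hu : legendreSym p (-u) = -1) (m : ℤ) (hm : ¬ ((p : ℤ) ∣ m))
    (t : ℕ) (ht : 2 ≤ t) :
    (cnt p t u ((p : ℤ) * m) : ℤ) = (p : ℤ) ^ (2 * t) + (p : ℤ) ^ (2 * t - 1) := by
  obtain ⟨s, rfl⟩ : ∃ s, t = s + 1 + 1 := ⟨t - 2, by omega⟩
  have hu' : (u : ZMod p) ≠ 0 := fun h => by
    rw [(legendreSym.eq_zero_iff p (-u)).mpr (by push_cast; rw [h, neg_zero])] at hu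
    exact absurd hu (by decide)
  have hm' : (m : ZMod p) ≠ 0 := by rwa [Ne, ZMod.intCast_zmod_eq_zero_iff_dvd]
  rw [LocalCount.cnt_succ hu', Nat.cast_mul, LocalCount.reducedCount_pow_succ hp hu' hm', hu,
    show 2 * (s + 1 + 1) - 1 = 2 * s + 3 by omega]
  push_cast
  ring
end

section
/- Let p be an odd prime and u an integer with Legendre symbol (−u | p) = −1. Then for every integer n and every integer t ≥ 2, the number of triples (x,y,z) ∈ (ℤ/p^tℤ)³ with u·x² + p·y² + p·u·z² = p²·n equals p³ times the number of triples (x,y,z) ∈ (ℤ/p^{t−2}ℤ)³ with u·x² + p·y² + p·u·z² = n. -/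
/-!
If `u x² + p y² + p u z² ≡ p² n (mod p^t)`, reducing mod `p` gives `p ∣ x`; dividing by `p` then
gives `y² + u z² ≡ 0 (mod p)`, which forces `p ∣ y, z` because `-u` is a non-residue. So the
solutions are exactly the `p • w`, `w ∈ (ℤ/p^t)³`, with `w mod p^(t-2)` a solution for `n`.
Counting fibres of the additive maps `w ↦ p • w` (kernel of order `p³`) and reduction
mod `p^(t-2)` (kernel of order `p⁶`) yields the factor `p³`.
-/

namespace AddMonoidHom

variable {F G H : Type*} [AddGroup G] [AddGroup H] [FunLike F G H] [AddMonoidHomClass F G H]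

theorem card_preimage_of_subset_range (f : F) {T : Set H} (hT : T ⊆ Set.range f) :
    Nat.card (f ⁻¹' T) = Nat.card (f ⁻¹' {0}) * Nat.card T := by
  choose σ hσ using fun t : T ↦ hT t.2
  rw [← Nat.card_prod]
  exact Nat.card_congr
    { toFun := fun g ↦ (⟨g - σ ⟨f g, g.2⟩, by simp [hσ]⟩, ⟨f g, g.2⟩)
      invFun := fun ⟨⟨k, hk⟩, t⟩ ↦ ⟨k + σ t, by simp_all⟩
      left_inv := fun g ↦ by simp
      right_inv := fun ⟨⟨k, hk⟩, t⟩ ↦ by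
        have hk0 : f k = 0 := hk
        ext <;> simp [hσ, hk0] }

theorem card_fiber_zero_mul_card_of_surjective (f : F) (hf : Function.Surjective f) :
    Nat.card (f ⁻¹' {0}) * Nat.card H = Nat.card G := by
  simpa using (card_preimage_of_subset_range f (T := Set.univ) (by simp [hf.range_eq])).symm

end AddMonoidHom

namespace ZMod

variable {n : ℕ} [NeZero n]

theorem castHom_eq_zero_iff_dvd_val {m : ℕ} (h : m ∣ n) (a : ZMod n) :
    castHom h (ZMod m) a = 0 ↔ m ∣ a.val := by
  rw [castHom_apply, cast_eq_val, natCast_eq_zero_iff]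

theorem natCast_mul_eq_zero_iff_dvd_val {k m : ℕ} (h : n = k * m) (hk : k ≠ 0) (a : ZMod n) :
    (k : ZMod n) * a = 0 ↔ m ∣ a.val := by
  subst h
  rw [← natCast_zmod_val a, ← Nat.cast_mul, natCast_eq_zero_iff, val_natCast_of_lt a.val_lt]
  exact Nat.mul_dvd_mul_iff_left (Nat.pos_of_ne_zero hk)

theorem natCast_mul_eq_zero_iff_castHom {k m : ℕ} (h : n = k * m) (hk : k ≠ 0) (a : ZMod n) :
    (k : ZMod n) * a = 0 ↔ castHom (Dvd.intro_left k h.symm) (ZMod m) a = 0 := by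
  rw [natCast_mul_eq_zero_iff_dvd_val h hk, castHom_eq_zero_iff_dvd_val]

theorem exists_natCast_mul_eq_of_dvd_val {k : ℕ} {a : ZMod n} (h : k ∣ a.val) :
    ∃ b : ZMod n, (k : ZMod n) * b = a := by
  obtain ⟨q, hq⟩ := h
  exact ⟨q, by rw [← Nat.cast_mul, ← hq, natCast_zmod_val]⟩

end ZMod

def diagForm {R : Type*} [CommRing R] (a b c : R) (v : R × R × R) : R :=
  a * v.1 ^ 2 + b * v.2.1 ^ 2 + c * v.2.2 ^ 2

section diagForm

variable {R S : Type*} [CommRing R] [CommRing S] (a b c : R)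

theorem diagForm_smul (r : R) (v : R × R × R) :
    diagForm a b c (r • v) = r ^ 2 * diagForm a b c v := by
  simp only [diagForm, Prod.smul_fst, Prod.smul_snd, smul_eq_mul]
  ring

theorem map_diagForm (f : R →+* S) (v : R × R × R) :
    f (diagForm a b c v) = diagForm (f a) (f b) (f c) (f.prodMap (f.prodMap f) v) := by
  simp [diagForm]

end diagForm

def reduceTriple (p : ℕ) {j k : ℕ} (h : j ≤ k) :
    ZMod (p ^ k) × ZMod (p ^ k) × ZMod (p ^ k) →+* ZMod (p ^ j) × ZMod (p ^ j) × ZMod (p ^ j) :=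
  let f := ZMod.castHom (pow_dvd_pow p h) (ZMod (p ^ j))
  f.prodMap (f.prodMap f)

theorem reduceTriple_surjective {p j k : ℕ} (h : j ≤ k) : Function.Surjective (reduceTriple p h) :=
  let hf := ZMod.castHom_surjective (pow_dvd_pow p h)
  hf.prodMap (hf.prodMap hf)

abbrev solutions (p t : ℕ) (u n : ℤ) : Set (ZMod (p ^ t) × ZMod (p ^ t) × ZMod (p ^ t)) :=
  diagForm (u : ZMod (p ^ t)) p (p * u) ⁻¹' {(n : ZMod (p ^ t))}

theorem cnt_eq_card_solutions (p t : ℕ) (u n : ℤ) : cnt p t u n = Nat.card (solutions p t u n) :=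
  rfl

section

variable {p : ℕ} [Fact p.Prime]

theorem card_reduceTriple_fiber_zero (j i : ℕ) :
    Nat.card (reduceTriple p (Nat.le_add_right j i) ⁻¹' {0}) = p ^ (3 * i) := by
  have h := AddMonoidHom.card_fiber_zero_mul_card_of_surjective _
    (reduceTriple_surjective (p := p) (Nat.le_add_right j i))
  simp only [Nat.card_prod, Nat.card_zmod] at h
  apply Nat.eq_of_mul_eq_mul_right (pos_of_ne_zero (NeZero.ne (p ^ j * (p ^ j * p ^ j))))
  rw [h]
  ring

theorem dvd_val_of_mem_solutions {u n : ℤ} (hu : legendreSym p (-u) = -1) {s : ℕ}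
    {x y z : ZMod (p ^ (s + 2))} (h : (x, y, z) ∈ solutions p (s + 2) u ((p : ℤ) ^ 2 * n)) :
    p ∣ x.val ∧ p ∣ y.val ∧ p ∣ z.val := by
  have hp : p ∣ p ^ (s + 2) := dvd_pow_self p (by omega)
  set π := ZMod.castHom hp (ZMod p)
  have hu0 : (u : ZMod p) ≠ 0 := by
    intro h0
    rw [← neg_eq_zero, ← Int.cast_neg, ← legendreSym.eq_zero_iff] at h0
    simp [h0] at hu
  simp only [← ZMod.castHom_eq_zero_iff_dvd_val hp]
  have hx : π x = 0 := by
    simpa [diagForm, hu0] using congrArg π h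
  obtain ⟨x', rfl⟩ :=
    ZMod.exists_natCast_mul_eq_of_dvd_val ((ZMod.castHom_eq_zero_iff_dvd_val hp x).mp hx)
  have hw : (p : ZMod (p ^ (s + 2))) * (y ^ 2 + u * z ^ 2 + p * (u * x' ^ 2 - n)) = 0 := by
    simp only [solutions, Set.mem_preimage, Set.mem_singleton_iff, diagForm] at h
    push_cast at h
    linear_combination h
  rw [ZMod.natCast_mul_eq_zero_iff_dvd_val (m := p ^ (s + 1)) (by ring)
    (Fact.out : p.Prime).ne_zero] at hw
  have hyz := (ZMod.castHom_eq_zero_iff_dvd_val hp _).mpr ((dvd_pow_self p s.succ_ne_zero).trans hw)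
  simp only [map_add, map_mul, map_pow, map_sub, map_natCast, map_intCast, ZMod.natCast_self,
    zero_mul, add_zero] at hyz
  exact ⟨hx, legendreSym.eq_zero_mod_of_eq_neg_one hu (by push_cast; linear_combination hyz)⟩

theorem solutions_subset_range_smul {u : ℤ} (hu : legendreSym p (-u) = -1) (n : ℤ) (s : ℕ) :
    solutions p (s + 2) u ((p : ℤ) ^ 2 * n) ⊆
      Set.range (DistribSMul.toAddMonoidHom _ (p : ZMod (p ^ (s + 2)))) := by
  rintro ⟨x, y, z⟩ h
  obtain ⟨hx, hy, hz⟩ := dvd_val_of_mem_solutions hu h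
  obtain ⟨x', rfl⟩ := ZMod.exists_natCast_mul_eq_of_dvd_val hx
  obtain ⟨y', rfl⟩ := ZMod.exists_natCast_mul_eq_of_dvd_val hy
  obtain ⟨z', rfl⟩ := ZMod.exists_natCast_mul_eq_of_dvd_val hz
  exact ⟨(x', y', z'), rfl⟩

theorem preimage_smul_solutions (u n : ℤ) (s : ℕ) :
    DistribSMul.toAddMonoidHom _ (p : ZMod (p ^ (s + 2))) ⁻¹'
        solutions p (s + 2) u ((p : ℤ) ^ 2 * n) =
      reduceTriple p (Nat.le_add_right s 2) ⁻¹' solutions p s u n := by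
  ext v
  have hv := ZMod.natCast_mul_eq_zero_iff_castHom (n := p ^ (s + 2)) (k := p ^ 2) (m := p ^ s)
    (by ring) (pow_ne_zero 2 (Fact.out : p.Prime).ne_zero)
    (diagForm (u : ZMod (p ^ (s + 2))) p (p * u) v - (n : ZMod _))
  rw [map_sub, map_diagForm, sub_eq_zero, map_intCast] at hv
  simp only [map_intCast, map_natCast, map_mul] at hv
  simp only [solutions, Set.mem_preimage, Set.mem_singleton_iff, DistribSMul.toAddMonoidHom_apply,
    diagForm_smul]
  refine Iff.trans ?_ hv
  push_cast
  rw [mul_sub, sub_eq_zero]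

theorem smul_fiber_zero_eq_reduceTriple_fiber_zero (s : ℕ) :
    DistribSMul.toAddMonoidHom _ (p : ZMod (p ^ (s + 2))) ⁻¹' {0} =
      reduceTriple p (Nat.le_add_right (s + 1) 1) ⁻¹' {0} := by
  have hp := ZMod.natCast_mul_eq_zero_iff_castHom (n := p ^ (s + 2)) (k := p) (m := p ^ (s + 1))
    (by ring) (Fact.out : p.Prime).ne_zero
  ext ⟨x, y, z⟩
  simp [reduceTriple, hp]

end

theorem local_count_scaling_general (p : ℕ) [Fact p.Prime] (u : ℤ)
    (hu : legendreSym p (-u) = -1) (n : ℤ) (t : ℕ) (ht : 2 ≤ t) :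
    cnt p t u ((p : ℤ) ^ 2 * n) = p ^ 3 * cnt p (t - 2) u n := by
  obtain ⟨s, rfl⟩ := Nat.exists_eq_add_of_le' ht
  have hS := AddMonoidHom.card_preimage_of_subset_range _ (solutions_subset_range_smul hu n s)
  have hT := AddMonoidHom.card_preimage_of_subset_range (reduceTriple p (Nat.le_add_right s 2))
    (T := solutions p s u n) ((reduceTriple_surjective _).range_eq ▸ Set.subset_univ _)
  rw [preimage_smul_solutions, hT, smul_fiber_zero_eq_reduceTriple_fiber_zero,
    card_reduceTriple_fiber_zero, card_reduceTriple_fiber_zero] at hS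
  rw [cnt_eq_card_solutions, cnt_eq_card_solutions, Nat.add_sub_cancel]
  refine Nat.eq_of_mul_eq_mul_left (pow_pos (Fact.out : p.Prime).pos 3) ?_
  calc _ = p ^ (3 * 1) * _ := by ring
    _ = _ := hS.symm
    _ = _ := by ring

theorem local_count_scaling (p : ℕ) [Fact p.Prime] (hp : p ≠ 2) (u : ℤ)
    (hu : legendreSym p (-u) = -1) (n : ℤ) (t : ℕ) (ht : 2 ≤ t) :
    cnt p t u ((p : ℤ) ^ 2 * n) = p ^ 3 * cnt p (t - 2) u n :=
  local_count_scaling_general p u hu n t ht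
end

section
/- Let n = 4^a·k be a positive integer with 4 ∤ k. Then there exists T such that for all integers t ≥ T, the number of triples (x,y,z) ∈ (ℤ/2^tℤ)³ with y·z − x² = n equals: 3·2^{2t−1} if k ≡ 7 (mod 8); 3·2^{2t−1} − 2^{2t−1−a} if k ≡ 3 (mod 8); and 3·2^{2t−1} − 3·2^{2t−2−a} if k ≡ 1 or 2 (mod 4). -/
/-- The number of solutions `(x,y,z)` in `ℤ/2^tℤ` of `y z - x² = n`. -/
noncomputable def cntG1 (t : ℕ) (n : ℤ) : ℕ :=
  Nat.card {v : ZMod (2 ^ t) × ZMod (2 ^ t) × ZMod (2 ^ t) |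
    v.2.1 * v.2.2 - v.1 ^ 2 = (n : ZMod (2 ^ t))}

/-- The number of solutions `(x,y,z)` in `ℤ/2^tℤ` of `4 y z - x² = n`. -/
noncomputable def cntG2 (t : ℕ) (n : ℤ) : ℕ :=
  Nat.card {v : ZMod (2 ^ t) × ZMod (2 ^ t) × ZMod (2 ^ t) |
    4 * v.2.1 * v.2.2 - v.1 ^ 2 = (n : ZMod (2 ^ t))}

/-!
For each `x` and `y` modulo `N`, the congruence `y z ≡ x² + n` has `gcd(y, N)` solutions `z` when
`gcd(y, N) ∣ x² + n` and none otherwise; summing over `x` shows that `y z - x² = n` has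
`N · ∑_{y < N} r(gcd(y, N))` solutions modulo `N`, where `r(g)` counts the square roots of `-n`
modulo `g`. For `N = 2^t`, splitting `y` by parity and using `r(4g, 4m) = 2 r(g, m)` gives
`cnt_{t+2}(4m) = 3 · 4^{t+1} + 8 cnt_t(m)`. When `4 ∤ k`, the number of square roots of `-k`
modulo `2^t` is constant for `t ≥ 3` (Hensel's lemma at the prime 2), so
`cnt_{t+1}(k) = 4 cnt_t(k)` for `t ≥ 3`, and `cnt_3(k)` only depends on `k mod 8`.
-/

open Finset

theorem Nat.count_mul_of_periodic {p : ℕ → Prop} [DecidablePred p] {d : ℕ}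
    (hp : Function.Periodic p d) (m : ℕ) : Nat.count p (m * d) = m * Nat.count p d := by
  induction m with
  | zero => simp
  | succ m ih =>
    have hshift : ∀ k, p (m * d + k) ↔ p k := fun k => by
      rw [add_comm, ← hp.nat_mul m k]
      norm_cast
    rw [add_mul, one_mul, Nat.count_add, ih]
    simp_rw [hshift]
    ring

theorem Finset.sum_range_two_mul {M : Type*} [AddCommMonoid M] (f : ℕ → M) (N : ℕ) :
    ∑ i ∈ range (2 * N), f i = ∑ i ∈ range N, (f (2 * i) + f (2 * i + 1)) := by
  induction N with
  | zero => simp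
  | succ N ih =>
    rw [mul_add, mul_one, sum_range_succ, sum_range_succ, sum_range_succ, ih, add_assoc]

theorem Nat.count_two_mul {p : ℕ → Prop} [DecidablePred p] (N : ℕ) :
    Nat.count p (2 * N) =
      Nat.count (fun i => p (2 * i)) N + Nat.count (fun i => p (2 * i + 1)) N := by
  simp only [Nat.count_eq_card_filter_range, card_filter, sum_range_two_mul, sum_add_distrib]

theorem Nat.count_add_count_of_disjoint {p q r : ℕ → Prop} [DecidablePred p] [DecidablePred q]
    [DecidablePred r] (h : ∀ x, p x ∨ q x ↔ r x) (hpq : ∀ x, ¬ (p x ∧ q x)) (n : ℕ) :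
    Nat.count p n + Nat.count q n = Nat.count r n := by
  simp only [Nat.count_eq_card_filter_range, card_filter, ← sum_add_distrib]
  refine sum_congr rfl fun x _ => ?_
  have := h x
  have := hpq x
  split_ifs <;> first | rfl | tauto

theorem Nat.count_mul_modEq {N : ℕ} (hN : 0 < N) (y c : ℕ) :
    Nat.count (fun z => y * z ≡ c [MOD N]) N = if y.gcd N ∣ c then y.gcd N else 0 := by
  have hg : 0 < y.gcd N := Nat.gcd_pos_of_pos_right y hN
  have hcop := Nat.coprime_div_gcd_div_gcd hg
  obtain ⟨y', hy⟩ := Nat.gcd_dvd_left y N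
  obtain ⟨N', hN'⟩ := Nat.gcd_dvd_right y N
  generalize y.gcd N = g at *
  subst hy hN'
  rw [Nat.mul_div_cancel_left _ hg, Nat.mul_div_cancel_left _ hg] at hcop
  have hN'pos : 0 < N' := Nat.pos_of_mul_pos_left hN
  split_ifs with hgc
  · obtain ⟨c', rfl⟩ := hgc
    have : NeZero N' := ⟨hN'pos.ne'⟩
    have hsol : ∀ z, g * y' * z ≡ g * c' [MOD g * N'] ↔
        z ≡ ((y' : ZMod N')⁻¹ * c').val [MOD N'] := by
      intro z
      rw [mul_assoc, Nat.ModEq.mul_left_cancel_iff' hg.ne', ← ZMod.natCast_eq_natCast_iff,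
        ← ZMod.natCast_eq_natCast_iff, ZMod.natCast_zmod_val, Nat.cast_mul]
      constructor
      · intro h
        rw [← h, ← mul_assoc, mul_comm _ (y' : ZMod N'), ZMod.coe_mul_inv_eq_one _ hcop,
          one_mul]
      · intro h
        rw [h, ← mul_assoc, ZMod.coe_mul_inv_eq_one _ hcop, one_mul]
    simp_rw [hsol]
    rw [Nat.count_modEq_card _ hN'pos, Nat.mul_div_cancel _ hN'pos, Nat.mul_mod_left]
    simp
  · rw [Nat.count_iff_forall_not]
    intro z _ hz
    exact hgc (Nat.modEq_zero_iff_dvd.mp ((hz.of_mul_right N').symm.trans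
      (Nat.modEq_zero_iff_dvd.mpr ((dvd_mul_right g y').mul_right z))))

theorem ZMod.sum_eq_sum_range {N : ℕ} [NeZero N] {M : Type*} [AddCommMonoid M]
    (f : ZMod N → M) :
    ∑ a, f a = ∑ i ∈ range N, f i :=
  Finset.sum_nbij' ZMod.val Nat.cast (fun a _ => mem_range.2 (ZMod.val_lt a))
    (fun _ _ => mem_univ _) (fun a _ => ZMod.natCast_zmod_val a)
    (fun _ hi => ZMod.val_cast_of_lt (mem_range.1 hi)) (fun a _ => by rw [ZMod.natCast_zmod_val])

def sqrtNegCount (g m : ℕ) : ℕ := Nat.count (fun x => g ∣ x ^ 2 + m) g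

theorem sqrtNegCount_congr {g m m' : ℕ} (h : m ≡ m' [MOD g]) :
    sqrtNegCount g m = sqrtNegCount g m' := by
  have hx : ∀ x, g ∣ x ^ 2 + m ↔ g ∣ x ^ 2 + m' := fun x => (h.add_left _).dvd_iff dvd_rfl
  simp_rw [sqrtNegCount, hx]

theorem sqrtNegCount_one (m : ℕ) : sqrtNegCount 1 m = 1 := by
  simp [sqrtNegCount, Nat.count_succ]

theorem sqrtNegCount_two (m : ℕ) : sqrtNegCount 2 m = 1 := by
  rw [← sqrtNegCount_congr (Nat.mod_modEq m 2)]
  rcases Nat.mod_two_eq_zero_or_one m with h | h <;> rw [h] <;> decide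

theorem periodic_dvd_sq_add (g m : ℕ) : Function.Periodic (fun x => g ∣ x ^ 2 + m) g := by
  intro x
  simp only [show (x + g) ^ 2 + m = x ^ 2 + m + g * (2 * x + g) by ring]
  exact propext (Nat.dvd_add_left (dvd_mul_right g _))

theorem count_dvd_sq_add {g N : ℕ} (h : g ∣ N) (m : ℕ) :
    Nat.count (fun x => g ∣ x ^ 2 + m) N = N / g * sqrtNegCount g m := by
  obtain ⟨q, rfl⟩ := h
  rcases Nat.eq_zero_or_pos g with rfl | hg
  · simp [sqrtNegCount]
  rw [mul_comm g q, Nat.count_mul_of_periodic (periodic_dvd_sq_add g m), Nat.mul_div_cancel _ hg,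
    sqrtNegCount]

theorem sqrtNegCount_four_mul (g m : ℕ) :
    sqrtNegCount (4 * g) (4 * m) = 2 * sqrtNegCount g m := by
  have hodd : ∀ i, ¬ 2 * (2 * g) ∣ (2 * i + 1) ^ 2 + 4 * m := fun i h => by
    have := (dvd_mul_right 2 _).trans h
    rw [show (2 * i + 1) ^ 2 + 4 * m = 2 * (2 * i * i + 2 * i + 2 * m) + 1 by ring] at this
    omega
  have heven : ∀ i, 2 * (2 * g) ∣ (2 * i) ^ 2 + 4 * m ↔ g ∣ i ^ 2 + m := fun i => by
    rw [show (2 * i) ^ 2 + 4 * m = 4 * (i ^ 2 + m) by ring, ← mul_assoc]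
    exact Nat.mul_dvd_mul_iff_left (by norm_num)
  rw [sqrtNegCount, show 4 * g = 2 * (2 * g) by ring, Nat.count_two_mul]
  simp_rw [heven, hodd, Nat.count_false, add_zero]
  rw [count_dvd_sq_add (dvd_mul_left g 2)]
  rcases Nat.eq_zero_or_pos g with rfl | hg
  · simp [sqrtNegCount]
  rw [Nat.mul_div_cancel _ hg]

theorem sqrtNegCount_two_mul_of_odd {g k : ℕ} (hg : 8 ∣ g) (hk : Odd k) :
    sqrtNegCount (2 * g) k = sqrtNegCount g k := by
  obtain ⟨q, rfl⟩ := hg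
  rcases Nat.eq_zero_or_pos q with rfl | hq
  · simp [sqrtNegCount]
  have hq8 : 0 < 8 * q := by omega
  have hper : Function.Periodic (fun x => 8 * q ∣ x ^ 2 + k) (4 * q) := fun x => by
    simp only [show (x + 4 * q) ^ 2 + k = x ^ 2 + k + 8 * q * (x + 2 * q) by ring]
    exact propext (Nat.dvd_add_left (dvd_mul_right _ _))
  have hper' : Function.Periodic (fun x => 2 * (8 * q) ∣ x ^ 2 + k) (8 * q) := fun x => by
    simp only [show (x + 8 * q) ^ 2 + k = x ^ 2 + k + 2 * (8 * q) * (x + 4 * q) by ring]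
    exact propext (Nat.dvd_add_left (dvd_mul_right _ _))
  -- of the two lifts `x` and `x + 4q` of a root modulo `8q`, exactly one is a root modulo `16q`
  have hlift : ∀ x, 8 * q ∣ x ^ 2 + k →
      (2 * (8 * q) ∣ (x + 4 * q) ^ 2 + k ↔ ¬ 2 * (8 * q) ∣ x ^ 2 + k) := by
    rintro x ⟨w, hw⟩
    obtain ⟨j, rfl⟩ := hk
    obtain ⟨c, rfl⟩ : Odd x := by
      rcases Nat.even_or_odd' x with ⟨c, rfl | rfl⟩
      · rw [show (2 * c) ^ 2 = 2 * (2 * c * c) by ring,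
          show 8 * q * w = 2 * (4 * q * w) by ring] at hw
        omega
      · exact odd_two_mul_add_one c
    rw [show (2 * c + 1 + 4 * q) ^ 2 + (2 * j + 1) = 8 * q * (w + 1) + 2 * (8 * q) * (c + q) by
      linear_combination hw, hw, Nat.dvd_add_left (dvd_mul_right _ _), mul_comm 2,
      Nat.mul_dvd_mul_iff_left hq8, Nat.mul_dvd_mul_iff_left hq8]
    omega
  have hroots : ∀ x, 2 * (8 * q) ∣ x ^ 2 + k ∨ 2 * (8 * q) ∣ (x + 4 * q) ^ 2 + k ↔
      8 * q ∣ x ^ 2 + k := fun x => by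
    refine ⟨fun h => ?_, fun h => by have := hlift x h; tauto⟩
    rcases h with h | h
    · exact (dvd_mul_left _ 2).trans h
    · exact (hper x).mp ((dvd_mul_left _ 2).trans h)
  have hdisj : ∀ x, ¬ (2 * (8 * q) ∣ x ^ 2 + k ∧ 2 * (8 * q) ∣ (x + 4 * q) ^ 2 + k) :=
    fun x ⟨h, h'⟩ => (hlift x ((dvd_mul_left _ 2).trans h)).1 h' h
  calc sqrtNegCount (2 * (8 * q)) k
      = 2 * Nat.count (fun x => 2 * (8 * q) ∣ x ^ 2 + k) (4 * q + 4 * q) := by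
        rw [sqrtNegCount, Nat.count_mul_of_periodic hper', show 4 * q + 4 * q = 8 * q by ring]
    _ = 2 * Nat.count (fun x => 8 * q ∣ x ^ 2 + k) (4 * q) := by
        rw [Nat.count_add, ← Nat.count_add_count_of_disjoint hroots hdisj]
        simp_rw [add_comm (4 * q)]
    _ = sqrtNegCount (8 * q) k := by
        rw [sqrtNegCount, ← Nat.count_mul_of_periodic hper, show 2 * (4 * q) = 8 * q by ring]

theorem sqrtNegCount_eq_zero {g k : ℕ} (hg : 4 ∣ g) (hk : k % 4 = 1 ∨ k % 4 = 2) :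
    sqrtNegCount g k = 0 := by
  rw [sqrtNegCount, Nat.count_iff_forall_not]
  intro x _ hx
  have := hg.trans hx
  rcases Nat.even_or_odd' x with ⟨c, rfl | rfl⟩ <;> ring_nf at this <;> omega

theorem sqrtNegCount_four_add_eight {k : ℕ} (hk : ¬ 4 ∣ k) :
    sqrtNegCount 4 k + sqrtNegCount 8 k =
      if k % 8 = 7 then 6 else if k % 8 = 3 then 2 else 0 := by
  have h4 : k ≡ k % 8 [MOD 4] := ((Nat.mod_modEq k 8).of_dvd (by norm_num)).symm
  rw [sqrtNegCount_congr h4, sqrtNegCount_congr (Nat.mod_modEq k 8).symm]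
  have : k % 8 < 8 := Nat.mod_lt k (by norm_num)
  have : k % 8 ≠ 0 ∧ k % 8 ≠ 4 := by omega
  generalize k % 8 = r at *
  interval_cases r <;> simp_all <;> decide

theorem sum_count_mul_modEq_sq_add {N : ℕ} (hN : 0 < N) (y n : ℕ) :
    ∑ x ∈ range N, Nat.count (fun z => y * z ≡ x ^ 2 + n [MOD N]) N
      = N * sqrtNegCount (y.gcd N) n := by
  have hg : y.gcd N ∣ N := Nat.gcd_dvd_right y N
  simp_rw [Nat.count_mul_modEq hN]
  rw [← sum_filter, sum_const, smul_eq_mul, ← Nat.count_eq_card_filter_range,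
    count_dvd_sq_add hg, mul_right_comm, Nat.div_mul_cancel hg]

theorem card_mul_sub_sq_eq_sum (N n : ℕ) [NeZero N] :
    Nat.card {v : ZMod N × ZMod N × ZMod N | v.2.1 * v.2.2 - v.1 ^ 2 = ((n : ℤ) : ZMod N)}
      = N * ∑ y ∈ range N, sqrtNegCount (y.gcd N) n := by
  have hcast : ∀ x y z : ℕ, (y : ZMod N) * z - (x : ZMod N) ^ 2 = ((n : ℤ) : ZMod N) ↔
      y * z ≡ x ^ 2 + n [MOD N] := fun x y z => by
    rw [← ZMod.natCast_eq_natCast_iff, sub_eq_iff_eq_add, Int.cast_natCast]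
    push_cast
    rw [add_comm]
  rw [Nat.card_eq_fintype_card, Fintype.card_subtype, card_filter]
  simp only [Set.mem_ofPred_eq, Fintype.sum_prod_type, ZMod.sum_eq_sum_range, hcast]
  rw [sum_comm, mul_sum]
  refine sum_congr rfl fun y _ => ?_
  simp only [← card_filter, ← Nat.count_eq_card_filter_range]
  exact sum_count_mul_modEq_sq_add (Nat.pos_of_neZero N) y n

theorem sum_range_two_pow_succ_gcd (F : ℕ → ℕ) (t : ℕ) :
    ∑ y ∈ range (2 ^ (t + 1)), F (y.gcd (2 ^ (t + 1)))
      = 2 ^ t * F 1 + ∑ y ∈ range (2 ^ t), F (2 * y.gcd (2 ^ t)) := by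
  have hodd : ∀ y, (2 * y + 1).gcd (2 * 2 ^ t) = 1 := fun y =>
    Nat.Coprime.mul_right (odd_two_mul_add_one y).coprime_two_right
      ((odd_two_mul_add_one y).coprime_two_right.pow_right t)
  simp only [pow_succ', sum_range_two_mul, sum_add_distrib, Nat.gcd_mul_left, hodd, sum_const,
    card_range, smul_eq_mul]
  ring

theorem sum_range_two_pow_succ_gcd_of_eq (F : ℕ → ℕ) (t : ℕ)
    (h : F (2 ^ (t + 1)) = F (2 ^ t)) :
    ∑ y ∈ range (2 ^ (t + 1)), F (y.gcd (2 ^ (t + 1)))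
      = 2 * ∑ y ∈ range (2 ^ t), F (y.gcd (2 ^ t)) := by
  induction t generalizing F with
  | zero =>
    rw [sum_range_two_pow_succ_gcd]
    norm_num at h ⊢
    rw [h]
    ring
  | succ t ih =>
    rw [sum_range_two_pow_succ_gcd, sum_range_two_pow_succ_gcd,
      ih (fun g => F (2 * g)) (by simpa only [← pow_succ'] using h)]
    ring

theorem cntG1_eq_sum (t n : ℕ) :
    cntG1 t n = 2 ^ t * ∑ y ∈ range (2 ^ t), sqrtNegCount (y.gcd (2 ^ t)) n :=
  card_mul_sub_sq_eq_sum (2 ^ t) n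

theorem cntG1_four_mul (t m : ℕ) :
    cntG1 (t + 2) (4 * m : ℕ) = 3 * 2 ^ (2 * t + 2) + 8 * cntG1 t m := by
  rw [cntG1_eq_sum, cntG1_eq_sum,
    sum_range_two_pow_succ_gcd (fun g => sqrtNegCount g (4 * m)) (t + 1),
    sum_range_two_pow_succ_gcd (fun g => sqrtNegCount (2 * g) (4 * m)) t]
  simp only [← mul_assoc, show 2 * 2 = 4 by rfl, sqrtNegCount_four_mul, mul_one, sqrtNegCount_one,
    sqrtNegCount_two, ← mul_sum]
  ring

theorem sqrtNegCount_two_pow_succ {k t : ℕ} (hk : ¬ 4 ∣ k) (ht : 3 ≤ t) :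
    sqrtNegCount (2 ^ (t + 1)) k = sqrtNegCount (2 ^ t) k := by
  rcases Nat.even_or_odd k with hke | hko
  · have h4 : ∀ s, 2 ≤ s → 4 ∣ 2 ^ s := fun s hs => pow_dvd_pow 2 hs
    have hk2 : k % 4 = 1 ∨ k % 4 = 2 := by obtain ⟨j, rfl⟩ := hke; omega
    rw [sqrtNegCount_eq_zero (h4 _ (by omega)) hk2, sqrtNegCount_eq_zero (h4 _ (by omega)) hk2]
  · rw [pow_succ']
    exact sqrtNegCount_two_mul_of_odd (pow_dvd_pow 2 ht) hko

theorem cntG1_succ_of_not_four_dvd {k t : ℕ} (hk : ¬ 4 ∣ k) (ht : 3 ≤ t) :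
    cntG1 (t + 1) k = 4 * cntG1 t k := by
  rw [cntG1_eq_sum, cntG1_eq_sum, sum_range_two_pow_succ_gcd_of_eq (fun g => sqrtNegCount g k) t
    (sqrtNegCount_two_pow_succ hk ht)]
  ring

theorem cntG1_three (k : ℕ) : cntG1 3 k = 8 * (6 + sqrtNegCount 4 k + sqrtNegCount 8 k) := by
  rw [cntG1_eq_sum]
  norm_num [sum_range_succ, sqrtNegCount_one, sqrtNegCount_two]
  ring

theorem cntG1_add_three_of_not_four_dvd {k : ℕ} (hk : ¬ 4 ∣ k) (t : ℕ) :
    cntG1 (t + 3) k = 2 ^ (2 * t) * cntG1 3 k := by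
  induction t with
  | zero => simp
  | succ t ih =>
    rw [show t + 1 + 3 = t + 3 + 1 by ring, cntG1_succ_of_not_four_dvd hk (by omega), ih]
    ring

theorem cntG1_add_two_mul_four_pow_mul (a t m : ℕ) :
    (2 * cntG1 (t + 2 * a) (4 ^ a * m : ℕ) : ℤ)
      = 3 * 2 ^ (2 * t + 4 * a) - 2 ^ (3 * a) * (3 * 2 ^ (2 * t) - 2 * cntG1 t m) := by
  induction a with
  | zero => simp
  | succ a ih =>
    have h := cntG1_four_mul (t + 2 * a) (4 ^ a * m)
    rw [show t + 2 * (a + 1) = t + 2 * a + 2 by ring, pow_succ', mul_assoc, h]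
    push_cast at ih ⊢
    linear_combination 8 * ih

theorem dyadic_count_G1_general (n : ℕ) (a k : ℕ) (hk : n = 4 ^ a * k)
    (h4 : ¬ (4 ∣ k)) :
    ∃ T : ℕ, ∀ t : ℕ, T ≤ t →
      (k % 8 = 7 → (cntG1 t n : ℤ) = 3 * 2 ^ (2 * t - 1)) ∧
      (k % 8 = 3 → (cntG1 t n : ℤ) = 3 * 2 ^ (2 * t - 1) - 2 ^ (2 * t - 1 - a)) ∧
      (k % 4 = 1 ∨ k % 4 = 2 →
        (cntG1 t n : ℤ) = 3 * 2 ^ (2 * t - 1) - 3 * 2 ^ (2 * t - 2 - a)) := by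
  refine ⟨2 * a + 3, fun t ht => ?_⟩
  obtain ⟨u, rfl⟩ : ∃ u, t = u + 3 + 2 * a := ⟨t - (2 * a + 3), by omega⟩
  have hcnt := cntG1_add_two_mul_four_pow_mul a (u + 3) k
  rw [← hk, cntG1_add_three_of_not_four_dvd h4, cntG1_three, add_assoc 6,
    sqrtNegCount_four_add_eight h4] at hcnt
  rw [show 2 * (u + 3 + 2 * a) - 1 = 2 * u + 4 * a + 5 by omega,
    show 2 * u + 4 * a + 5 - a = 2 * u + 3 * a + 5 by omega,
    show 2 * (u + 3 + 2 * a) - 2 - a = 2 * u + 3 * a + 4 by omega]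
  push_cast at hcnt
  refine ⟨fun h => ?_, fun h => ?_, fun h => ?_⟩ <;> refine mul_left_cancel₀ two_ne_zero ?_
  · rw [hcnt, if_pos h]
    ring
  · rw [hcnt, if_neg (by omega), if_pos h]
    ring
  · rw [hcnt, if_neg (by omega), if_neg (by omega)]
    ring

theorem dyadic_count_G1 (n : ℕ) (hn : 0 < n) (a k : ℕ) (hk : n = 4 ^ a * k)
    (h4 : ¬ (4 ∣ k)) :
    ∃ T : ℕ, ∀ t : ℕ, T ≤ t →
      (k % 8 = 7 → (cntG1 t n : ℤ) = 3 * 2 ^ (2 * t - 1)) ∧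
      (k % 8 = 3 → (cntG1 t n : ℤ) = 3 * 2 ^ (2 * t - 1) - 2 ^ (2 * t - 1 - a)) ∧
      (k % 4 = 1 ∨ k % 4 = 2 →
        (cntG1 t n : ℤ) = 3 * 2 ^ (2 * t - 1) - 3 * 2 ^ (2 * t - 2 - a)) :=
  dyadic_count_G1_general n a k hk h4
end

section
/- For every integer t ≥ 3 and every integer n, the number of triples (x,y,z) ∈ (ℤ/2^tℤ)³ with 4·y·z − x² = n equals: 3·4^t if n ≡ 7 (mod 8); 4^t if n ≡ 3 (mod 8); and 0 if n ≡ 1 or 2 (mod 4). -/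
/-!
Write `N_t(n)` for the number of solutions modulo `2^t`. Each solution modulo `2^t` has 8 lifts
modulo `2^(t+1)`, at which `4yz - x²` takes the value `n` or `n + 2^t`; hence
`N_{t+1}(n) + N_{t+1}(n + 2^t) = 8 N_t(n)`. For odd `n` every solution has `x` odd, and for
`t ≥ 3` the substitution `x ↦ x + 2^(t-1)` changes `x²` by `2^t x + 2^(2t-2) ≡ 2^t` modulo
`2^(t+1)`, so the two counts agree and `N_{t+1}(n) = 4 N_t(n)`. The counts modulo 8 are found by
enumeration. For `n ≡ 1, 2 (mod 4)` there are no solutions modulo 4 already.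
-/

open Finset

theorem AddMonoidHom.card_filter_comp_mul_card {A B : Type*} [AddGroup A] [AddGroup B]
    [Fintype A] [Fintype B] [DecidableEq B] (f : A →+ B) (hf : Function.Surjective f)
    (p : B → Prop) [DecidablePred p] :
    #{a | p (f a)} * Fintype.card B = Fintype.card A * #{b | p b} := by
  set k := #{a | f a = 0}
  have hfiber (b : B) : #{a | f a = b} = k :=
    AddMonoidHom.card_fiber_eq_of_mem_range f (hf b) (hf 0)
  have hpreimage (s : Finset B) : #{a | f a ∈ s} = #s * k := by
    rw [← sum_card_fiberwise_eq_card_filter, sum_const_nat fun b _ => hfiber b]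
  have hA : Fintype.card A = Fintype.card B * k := by simpa using hpreimage univ
  have hp : #{a | p (f a)} = #{b | p b} * k := by simpa using hpreimage {b | p b}
  rw [hA, hp]
  ring

section NegDisc

variable {R S : Type*} [CommRing R] [CommRing S]

/-- `4yz - x²` is minus the discriminant of the binary quadratic form `y X² + x XY + z Y²`. -/
def negDisc (v : R × R × R) : R := 4 * v.2.1 * v.2.2 - v.1 ^ 2

lemma map_negDisc (f : R →+* S) (v : R × R × R) :
    f (negDisc v) = negDisc (f v.1, f v.2.1, f v.2.2) := by
  simp [negDisc, map_ofNat]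

lemma negDisc_add_two_pow {s : ℕ} (hs : 2 ≤ s) (h : (2 : R) ^ (s + 2) = 0) {v : R × R × R}
    (hx : Odd v.1) : negDisc (v.1 + 2 ^ s, v.2) = negDisc v + 2 ^ (s + 1) := by
  obtain ⟨w, hw⟩ := hx
  obtain ⟨r, rfl⟩ := Nat.exists_eq_add_of_le hs
  simp only [negDisc, hw]
  linear_combination -(w + 1 + 2 ^ r) * h

end NegDisc

lemma odd_fst_of_negDisc_eq_intCast {m : ℕ} (hm : 2 ∣ m) {n : ℤ} (hn : Odd n)
    {v : ZMod m × ZMod m × ZMod m} (h : negDisc v = n) : Odd v.1 := by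
  set π := ZMod.castHom hm (ZMod 2)
  have hmod2 : negDisc (π v.1, π v.2.1, π v.2.2) = 1 := by
    rw [← map_negDisc, h, map_intCast, ZMod.intCast_eq_one_iff_odd]
    exact hn
  have fst_eq_one : ∀ a b c : ZMod 2, negDisc (a, b, c) = 1 → a = 1 := by decide
  have hx := fst_eq_one _ _ _ hmod2
  rw [← ZMod.intCast_zmod_cast v.1, map_intCast, ZMod.intCast_eq_one_iff_odd] at hx
  simpa using hx.map (Int.castRingHom (ZMod m))

lemma cntG2_eq_card (t : ℕ) (n : ℤ) :
    cntG2 t n = #{v : ZMod (2 ^ t) × ZMod (2 ^ t) × ZMod (2 ^ t) | negDisc v = n} := by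
  rw [cntG2, Nat.card_eq_fintype_card]
  exact Fintype.card_subtype _

lemma cntG2_congr {t : ℕ} {n n' : ℤ} (h : n ≡ n' [ZMOD 2 ^ t]) : cntG2 t n = cntG2 t n' := by
  have h' : (n : ZMod (2 ^ t)) = n' := by exact_mod_cast (ZMod.intCast_eq_intCast_iff _ _ _).2 h
  rw [cntG2, cntG2, h']

lemma ZMod.castHom_two_pow_succ_eq_zero_iff {t : ℕ} (u : ZMod (2 ^ (t + 1))) :
    ZMod.castHom (pow_dvd_pow 2 t.le_succ) (ZMod (2 ^ t)) u = 0 ↔ u = 0 ∨ u = 2 ^ t := by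
  constructor
  · rw [← ZMod.natCast_zmod_val u, map_natCast, ZMod.natCast_eq_zero_iff]
    rintro ⟨c, hc⟩
    have hc2 : c < 2 := by
      have := u.val_lt
      rw [hc, pow_succ] at this
      exact Nat.lt_of_mul_lt_mul_left this
    interval_cases c <;> simp [hc]
  · rintro (rfl | rfl)
    · exact map_zero _
    · rw [map_pow, map_ofNat]
      exact_mod_cast ZMod.natCast_self (2 ^ t)

lemma ZMod.two_pow_ne_zero (t : ℕ) : (2 : ZMod (2 ^ (t + 1))) ^ t ≠ 0 := by
  have h : ((2 ^ t : ℕ) : ZMod (2 ^ (t + 1))) ≠ 0 := by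
    rw [ne_eq, ZMod.natCast_eq_zero_iff, Nat.pow_dvd_pow_iff_le_right one_lt_two]
    omega
  exact_mod_cast h

lemma cntG2_succ_add_cntG2_succ (t : ℕ) (n : ℤ) :
    cntG2 (t + 1) n + cntG2 (t + 1) (n + 2 ^ t) = 8 * cntG2 t n := by
  set π := ZMod.castHom (pow_dvd_pow 2 t.le_succ) (ZMod (2 ^ t))
  have hπ := ZMod.castHom_surjective (pow_dvd_pow 2 t.le_succ)
  let f := (π.prodMap (π.prodMap π)).toAddMonoidHom
  have hcount := f.card_filter_comp_mul_card (hπ.prodMap (hπ.prodMap hπ)) (negDisc · = n)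
  have hlift : #{w | negDisc (f w) = (n : ZMod (2 ^ t))} =
      cntG2 (t + 1) n + cntG2 (t + 1) (n + 2 ^ t) := by
    rw [cntG2_eq_card, cntG2_eq_card, ← card_union_of_disjoint, ← filter_or]
    · congr 1
      ext w
      have hfw : negDisc (f w) = π (negDisc w) := (map_negDisc π w).symm
      rw [mem_filter, mem_filter, hfw, ← map_intCast π, ← sub_eq_zero, ← map_sub,
        ZMod.castHom_two_pow_succ_eq_zero_iff, sub_eq_zero, sub_eq_iff_eq_add']
      push_cast
      rfl
    · refine disjoint_filter.2 fun w _ h h' => ZMod.two_pow_ne_zero t ?_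
      push_cast at h'
      simpa [h] using h'
  simp only [ZMod.card, Fintype.card_prod, Nat.succ_eq_add_one] at hcount
  rw [← cntG2_eq_card, hlift] at hcount
  exact Nat.eq_of_mul_eq_mul_right (by positivity) (hcount.trans (by ring))

lemma cntG2_le_cntG2_add_two_pow {t : ℕ} (ht : 3 ≤ t) {n : ℤ} (hn : Odd n) :
    cntG2 (t + 1) n ≤ cntG2 (t + 1) (n + 2 ^ t) := by
  obtain ⟨s, rfl⟩ : ∃ s, t = s + 1 := ⟨t - 1, by omega⟩
  have h0 : (2 : ZMod (2 ^ (s + 2))) ^ (s + 2) = 0 := by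
    exact_mod_cast ZMod.natCast_self (2 ^ (s + 2))
  rw [cntG2_eq_card, cntG2_eq_card]
  refine card_le_card_of_injOn (fun v => (v.1 + 2 ^ s, v.2)) (fun v hv => ?_) ?_
  · simp only [mem_coe, mem_filter, mem_univ, true_and] at hv ⊢
    have hx := odd_fst_of_negDisc_eq_intCast (dvd_pow_self 2 (by omega)) hn hv
    rw [negDisc_add_two_pow (by omega) h0 hx, hv]
    push_cast
    rfl
  · intro v _ w _ h
    simp only [Prod.mk.injEq, add_left_inj] at h
    exact Prod.ext h.1 h.2

lemma cntG2_add_two_pow {t : ℕ} (ht : 3 ≤ t) {n : ℤ} (hn : Odd n) :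
    cntG2 (t + 1) (n + 2 ^ t) = cntG2 (t + 1) n := by
  refine le_antisymm ?_ (cntG2_le_cntG2_add_two_pow ht hn)
  have hn' : Odd (n + 2 ^ t) := hn.add_even (even_two.pow_of_ne_zero (by omega))
  calc cntG2 (t + 1) (n + 2 ^ t) ≤ cntG2 (t + 1) (n + 2 ^ t + 2 ^ t) :=
        cntG2_le_cntG2_add_two_pow ht hn'
    _ = cntG2 (t + 1) n := cntG2_congr (Int.modEq_iff_dvd.2 ⟨-1, by ring⟩)

lemma cntG2_succ {t : ℕ} (ht : 3 ≤ t) {n : ℤ} (hn : Odd n) :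
    cntG2 (t + 1) n = 4 * cntG2 t n := by
  have := cntG2_succ_add_cntG2_succ t n
  rw [cntG2_add_two_pow ht hn] at this
  omega

lemma cntG2_eq_four_pow_mul {t : ℕ} (ht : 3 ≤ t) {n : ℤ} (hn : Odd n) :
    cntG2 t n = 4 ^ (t - 3) * cntG2 3 n := by
  induction t, ht using Nat.le_induction with
  | base => simp
  | succ t ht ih =>
    rw [cntG2_succ ht hn, ih, show t + 1 - 3 = t - 3 + 1 by omega, pow_succ]
    ring

lemma cntG2_eq_zero {t : ℕ} (ht : 2 ≤ t) {n : ℤ} (hn : n % 4 = 1 ∨ n % 4 = 2) :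
    cntG2 t n = 0 := by
  rw [cntG2_eq_card, card_eq_zero, filter_eq_empty_iff]
  intro v _ hv
  set π := ZMod.castHom (pow_dvd_pow 2 ht) (ZMod 4)
  have hmod4 : negDisc (π v.1, π v.2.1, π v.2.2) = ((n % 4 : ℤ) : ZMod 4) := by
    rw [← map_negDisc, hv, map_intCast]
    exact (ZMod.intCast_eq_intCast_iff' _ _ 4).2 (by omega)
  have values_mod4 : ∀ a b c : ZMod 4, negDisc (a, b, c) ≠ 1 ∧ negDisc (a, b, c) ≠ 2 := by
    decide
  rcases hn with hn | hn <;> rw [hn] at hmod4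
  · exact (values_mod4 _ _ _).1 hmod4
  · exact (values_mod4 _ _ _).2 hmod4

set_option maxRecDepth 10000 in
lemma cntG2_three_seven : cntG2 3 7 = 192 := by
  rw [cntG2_eq_card]
  decide

set_option maxRecDepth 10000 in
lemma cntG2_three_three : cntG2 3 3 = 64 := by
  rw [cntG2_eq_card]
  decide

theorem dyadic_count_G2_init (t : ℕ) (ht : 3 ≤ t) (n : ℤ) :
    (n % 8 = 7 → (cntG2 t n : ℤ) = 3 * 4 ^ t) ∧
    (n % 8 = 3 → (cntG2 t n : ℤ) = 4 ^ t) ∧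
    (n % 4 = 1 ∨ n % 4 = 2 → (cntG2 t n : ℤ) = 0) := by
  refine ⟨fun h => ?_, fun h => ?_, fun h => ?_⟩
  · rw [cntG2_eq_four_pow_mul ht (Int.odd_iff.2 (by omega)),
      cntG2_congr (n' := 7) (by norm_num [Int.ModEq, h]), cntG2_three_seven,
      ← pow_sub_mul_pow (4 : ℤ) ht]
    push_cast
    ring
  · rw [cntG2_eq_four_pow_mul ht (Int.odd_iff.2 (by omega)),
      cntG2_congr (n' := 3) (by norm_num [Int.ModEq, h]), cntG2_three_three,
      ← pow_sub_mul_pow (4 : ℤ) ht]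
    push_cast
    ring
  · rw [cntG2_eq_zero (by omega) h, Nat.cast_zero]
end

section
/- For every integer t ≥ 3 and every integer n, 4·L₁ − L₂ = 3·4^t, where L₁ is the number of triples (x,y,z) ∈ (ℤ/2^tℤ)³ with y·z − x² = n and L₂ is the number of triples (x,y,z) ∈ (ℤ/2^tℤ)³ with 4·y·z − x² = n. -/
/-!
In `ℤ/2^tℤ` with `t ≥ 1` the units are the odd residues and the non-units are the doubles `2a`,
each of them hit by exactly two `a`. Fix `x` and put `c = n + x²`. Among the factorizations
`c = u v`, those with a unit factor number `|(ℤ/2^tℤ)ˣ| = 2^(t-1)` if `c` is a unit and twice that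
otherwise, while `(y, z) ↦ (2y, 2z)` maps the solutions of `4 y z = c` four-to-one onto the
factorizations with both factors non-units. Hence `4 #{uv = c} - #{4yz = c}` is `2^(t+1)` or
`2^(t+2)` according as `c` is a unit or not, and `n + x²` is a unit for exactly half of the `x`.
-/

open Finset
open scoped Classical

theorem AddMonoidHom.card_fiber_mul_card_image {G H : Type*} [AddGroup G] [Fintype G]
    [AddMonoid H] [DecidableEq H] (f : G →+ H) {y : H} (hy : y ∈ Set.range f) :
    #{g | f g = y} * #(univ.image f) = Fintype.card G := by
  rw [← card_univ, card_eq_sum_card_image f univ, mul_comm, ← smul_eq_mul, ← sum_const]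
  refine sum_congr rfl fun z hz => ?_
  obtain ⟨g, -, rfl⟩ := mem_image.mp hz
  exact AddMonoidHom.card_fiber_eq_of_mem_range f hy ⟨g, rfl⟩

section CommRing

variable {R : Type*} [CommRing R] [Fintype R] [DecidableEq R]

theorem card_sub_sq_eq_sum (f : R × R → R) (n : R) :
    Nat.card {v : R × R × R | f v.2 - v.1 ^ 2 = n} =
      ∑ x : R, #{p : R × R | f p = n + x ^ 2} := by
  rw [Nat.card_eq_fintype_card, Fintype.card_subtype, card_filter, Fintype.sum_prod_type]
  refine sum_congr rfl fun x _ => ?_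
  simp only [Set.mem_ofPred_eq, card_filter, sub_eq_iff_eq_add', add_comm]

theorem card_mul_eq_and_isUnit_fst (c : R) :
    #{p : R × R | p.1 * p.2 = c ∧ IsUnit p.1} = #{u : R | IsUnit u} := by
  refine card_nbij' Prod.fst (fun u => (u, Ring.inverse u * c)) ?_ ?_ ?_ fun _ _ => rfl <;>
    simp only [coe_filter_univ, Set.MapsTo, Set.LeftInvOn, Set.mem_ofPred_eq]
  · exact fun p hp => hp.2
  · exact fun u hu => ⟨by rw [← mul_assoc, Ring.mul_inverse_cancel _ hu, one_mul], hu⟩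
  · rintro ⟨u, v⟩ ⟨rfl, hu⟩
    rw [← mul_assoc, Ring.inverse_mul_cancel _ hu, one_mul]

theorem card_mul_eq_and_not_isUnit_fst_and_isUnit_snd (c : R) :
    #{p : R × R | p.1 * p.2 = c ∧ ¬IsUnit p.1 ∧ IsUnit p.2} =
      if IsUnit c then 0 else #{u : R | IsUnit u} := by
  split_ifs with hc
  · refine card_eq_zero.mpr (filter_eq_empty_iff.mpr fun p _ ⟨hp, hp₁, _⟩ => hp₁ ?_)
    exact isUnit_of_mul_isUnit_left (hp ▸ hc)
  · refine card_nbij' Prod.snd (fun v => (c * Ring.inverse v, v)) ?_ ?_ ?_ fun _ _ => rfl <;>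
      simp only [coe_filter_univ, Set.MapsTo, Set.LeftInvOn, Set.mem_ofPred_eq]
    · exact fun p hp => hp.2.2
    · intro v hv
      have hcv : c * Ring.inverse v * v = c := by
        rw [mul_assoc, Ring.inverse_mul_cancel _ hv, mul_one]
      exact ⟨hcv, fun h => hc (hcv ▸ h.mul hv), hv⟩
    · rintro ⟨u, v⟩ ⟨rfl, -, hv⟩
      rw [mul_assoc, Ring.mul_inverse_cancel _ hv, mul_one]

theorem card_mul_eq_eq_ite_mul_card_isUnit_add (c : R) :
    #{p : R × R | p.1 * p.2 = c} = (if IsUnit c then 1 else 2) * #{u : R | IsUnit u} +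
      #{p : R × R | p.1 * p.2 = c ∧ ¬IsUnit p.1 ∧ ¬IsUnit p.2} := by
  have hsplit : #{p : R × R | p.1 * p.2 = c} = #{p : R × R | p.1 * p.2 = c ∧ IsUnit p.1} +
      (#{p : R × R | p.1 * p.2 = c ∧ ¬IsUnit p.1 ∧ IsUnit p.2} +
        #{p : R × R | p.1 * p.2 = c ∧ ¬IsUnit p.1 ∧ ¬IsUnit p.2}) := by
    have h₁ := card_filter_add_card_filter_not (s := {p : R × R | p.1 * p.2 = c})
      fun p => IsUnit p.1
    have h₂ := card_filter_add_card_filter_not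
      (s := {p : R × R | p.1 * p.2 = c ∧ ¬IsUnit p.1}) fun p => IsUnit p.2
    simp only [filter_filter, and_assoc] at h₁ h₂
    omega
  rw [hsplit, card_mul_eq_and_isUnit_fst, card_mul_eq_and_not_isUnit_fst_and_isUnit_snd]
  split_ifs <;> ring

end CommRing

section TwoPower

variable (s : ℕ)

def parity : ZMod (2 ^ (s + 1)) →+* ZMod 2 :=
  ZMod.castHom (dvd_pow_self 2 s.succ_ne_zero) (ZMod 2)

variable {s}

theorem parity_eq_zero_iff {u : ZMod (2 ^ (s + 1))} : parity s u = 0 ↔ ∃ a, 2 * a = u := by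
  constructor
  · obtain ⟨m, rfl⟩ := ZMod.natCast_zmod_surjective u
    rw [map_natCast, ZMod.natCast_eq_zero_iff]
    rintro ⟨k, rfl⟩
    exact ⟨k, by push_cast; rfl⟩
  · rintro ⟨a, rfl⟩
    rw [map_mul, map_ofNat, show (2 : ZMod 2) = 0 from rfl, zero_mul]

theorem not_isUnit_iff_parity_eq_zero {u : ZMod (2 ^ (s + 1))} :
    ¬IsUnit u ↔ parity s u = 0 := by
  obtain ⟨m, rfl⟩ := ZMod.natCast_zmod_surjective u
  rw [ZMod.isUnit_iff_coprime, Nat.coprime_pow_right_iff s.succ_pos, map_natCast,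
    ZMod.natCast_eq_zero_iff, Nat.coprime_comm, Nat.Prime.coprime_iff_not_dvd Nat.prime_two,
    not_not]

theorem isUnit_iff_parity_eq_one {u : ZMod (2 ^ (s + 1))} : IsUnit u ↔ parity s u = 1 := by
  rw [← not_iff_not, not_isUnit_iff_parity_eq_zero]
  generalize parity s u = b
  revert b
  decide

theorem card_parity_fiber (b : ZMod 2) : #{x : ZMod (2 ^ (s + 1)) | parity s x = b} = 2 ^ s := by
  have h := (parity s).toAddMonoidHom.card_fiber_mul_card_image (y := b)
    (ZMod.ringHom_surjective (parity s) b)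
  rw [image_univ_of_surjective (f := (parity s).toAddMonoidHom) (ZMod.ringHom_surjective _),
    card_univ, ZMod.card, ZMod.card] at h
  exact Nat.eq_of_mul_eq_mul_right two_pos (h.trans (pow_succ 2 s))

theorem card_parity_add_sq_fiber (n : ZMod (2 ^ (s + 1))) (b : ZMod 2) :
    #{x : ZMod (2 ^ (s + 1)) | parity s (n + x ^ 2) = b} = 2 ^ s := by
  convert card_parity_fiber (b - parity s n) using 2
  ext x
  rw [mem_filter_univ, mem_filter_univ, map_add, map_pow, ZMod.pow_card, eq_sub_iff_add_eq']

theorem card_isUnit : #{u : ZMod (2 ^ (s + 1)) | IsUnit u} = 2 ^ s := by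
  simp_rw [isUnit_iff_parity_eq_one, card_parity_fiber]

theorem not_isUnit_two_mul (a : ZMod (2 ^ (s + 1))) : ¬IsUnit (2 * a) :=
  not_isUnit_iff_parity_eq_zero.mpr (parity_eq_zero_iff.mpr ⟨a, rfl⟩)

theorem card_two_mul_eq {u : ZMod (2 ^ (s + 1))} (hu : ¬IsUnit u) : #{a | 2 * a = u} = 2 := by
  have hrange := parity_eq_zero_iff.mp (not_isUnit_iff_parity_eq_zero.mp hu)
  have h := (AddMonoidHom.mulLeft (2 : ZMod (2 ^ (s + 1)))).card_fiber_mul_card_image hrange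
  have himage : univ.image (AddMonoidHom.mulLeft (2 : ZMod (2 ^ (s + 1)))) =
      ({v | parity s v = 0} : Finset _) := by
    ext v
    simp only [mem_image, mem_univ, true_and, mem_filter_univ, parity_eq_zero_iff,
      AddMonoidHom.coe_mulLeft]
  rw [himage, card_parity_fiber, ZMod.card] at h
  exact Nat.eq_of_mul_eq_mul_right (by positivity) (h.trans (pow_succ' 2 s))

theorem card_four_mul_mul_eq (c : ZMod (2 ^ (s + 1))) :
    #{p : ZMod (2 ^ (s + 1)) × ZMod (2 ^ (s + 1)) | 4 * p.1 * p.2 = c} =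
      4 * #{p : ZMod (2 ^ (s + 1)) × ZMod (2 ^ (s + 1)) |
        p.1 * p.2 = c ∧ ¬IsUnit p.1 ∧ ¬IsUnit p.2} := by
  have hmaps : Set.MapsTo (fun p : ZMod (2 ^ (s + 1)) × ZMod (2 ^ (s + 1)) => (2 * p.1, 2 * p.2))
      ({p : ZMod (2 ^ (s + 1)) × ZMod (2 ^ (s + 1)) | 4 * p.1 * p.2 = c} : Finset _)
      ({p : ZMod (2 ^ (s + 1)) × ZMod (2 ^ (s + 1)) |
        p.1 * p.2 = c ∧ ¬IsUnit p.1 ∧ ¬IsUnit p.2} : Finset _) := by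
    intro p hp
    simp only [coe_filter_univ, Set.mem_ofPred_eq] at hp ⊢
    exact ⟨by rw [← hp]; ring, not_isUnit_two_mul p.1, not_isUnit_two_mul p.2⟩
  rw [card_eq_sum_card_fiberwise hmaps, sum_const_nat, mul_comm]
  rintro ⟨u, v⟩ huv
  rw [mem_filter_univ] at huv
  obtain ⟨rfl, hu, hv⟩ := huv
  have hfiber : ({p : ZMod (2 ^ (s + 1)) × ZMod (2 ^ (s + 1)) |
      4 * p.1 * p.2 = u * v ∧ (2 * p.1, 2 * p.2) = (u, v)} : Finset _) =
      ({a | 2 * a = u} : Finset _) ×ˢ ({b | 2 * b = v} : Finset _) := by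
    rw [← filter_product, univ_product_univ]
    refine filter_congr fun p _ => ?_
    rw [Prod.mk.injEq]
    constructor
    · exact And.right
    · rintro ⟨rfl, rfl⟩
      exact ⟨by ring, rfl, rfl⟩
  rw [filter_filter, hfiber, card_product, card_two_mul_eq hu, card_two_mul_eq hv]

theorem four_mul_card_mul_eq_sub_card_four_mul_mul_eq (c : ZMod (2 ^ (s + 1))) :
    4 * (#{p : ZMod (2 ^ (s + 1)) × ZMod (2 ^ (s + 1)) | p.1 * p.2 = c} : ℤ) -
      #{p : ZMod (2 ^ (s + 1)) × ZMod (2 ^ (s + 1)) | 4 * p.1 * p.2 = c} =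
      2 ^ (s + 2) * if IsUnit c then 1 else 2 := by
  rw [card_mul_eq_eq_ite_mul_card_isUnit_add, card_four_mul_mul_eq, card_isUnit]
  split_ifs <;> push_cast <;> ring

end TwoPower

theorem dyadic_count_relation_general (t : ℕ) (n : ℤ) :
    4 * (cntG1 t n : ℤ) - (cntG2 t n : ℤ) = 3 * 4 ^ t := by
  rcases t with _ | s
  · have hcard (f : ZMod 1 × ZMod 1 × ZMod 1 → ZMod 1) (c : ZMod 1) :
        Nat.card {v | f v = c} = 1 :=
      Nat.card_eq_one_iff_unique.mpr ⟨inferInstance, ⟨⟨0, Subsingleton.elim _ _⟩⟩⟩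
    rw [cntG1, cntG2, pow_zero, hcard, hcard]
    norm_num
  · rw [cntG1, cntG2, card_sub_sq_eq_sum (fun p => p.1 * p.2),
      card_sub_sq_eq_sum (fun p => 4 * p.1 * p.2)]
    push_cast
    rw [mul_sum, ← sum_sub_distrib]
    simp_rw [four_mul_card_mul_eq_sub_card_four_mul_mul_eq]
    rw [← mul_sum, sum_ite, sum_const, sum_const]
    simp_rw [not_isUnit_iff_parity_eq_zero, isUnit_iff_parity_eq_one, card_parity_add_sq_fiber]
    rw [show (4 : ℤ) = 2 ^ 2 by norm_num, ← pow_mul]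
    simp only [nsmul_eq_mul]
    push_cast
    ring

theorem dyadic_count_relation (t : ℕ) (ht : 3 ≤ t) (n : ℤ) :
    4 * (cntG1 t n : ℤ) - (cntG2 t n : ℤ) = 3 * 4 ^ t :=
  dyadic_count_relation_general t n
end

section
/- For every integer t ≥ 2 and every integer n, the number of triples (x,y,z) ∈ (ℤ/2^tℤ)³ with 4·y·z − x² = 4n equals 32 times the number of triples (x,y,z) ∈ (ℤ/2^{t−2}ℤ)³ with y·z − x² = n. -/
/-!
More generally, count solutions of `c²yz − x² = c²n` modulo `c²m`. Since `c² ∣ x²` forces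
`c ∣ x`, every solution is `x = ck` with `k` determined modulo `cm`, and the equation then says
`yz − k² ≡ n (mod m)`. So the solutions are, bijectively, the preimage of the solution set
modulo `m` under the reduction map `ℤ/cm × ℤ/c²m × ℤ/c²m → (ℤ/m)³`. This is a surjective
additive map, so all its fibres have `c · c² · c² = c⁵` elements. Take `c = 2`.
-/

theorem AddMonoidHom.card_preimage_of_surjective {G H : Type*} [AddGroup G] [AddGroup H]
    {f : G →+ H} (hf : Function.Surjective f) (S : Set H) :
    Nat.card (f ⁻¹' S) = Nat.card f.ker * Nat.card S := by
  let e := QuotientAddGroup.quotientKerEquivOfSurjective f hf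
  change Nat.card (QuotientAddGroup.mk ⁻¹' (e ⁻¹' S)) = _
  rw [Nat.card_congr (QuotientAddGroup.preimageMkEquivAddSubgroupProdSet _ _), Nat.card_prod,
    Nat.card_preimage_of_injective e.injective (by simp [e.surjective.range_eq])]

theorem AddMonoidHom.card_eq_card_ker_mul_of_surjective {G H : Type*} [AddGroup G] [AddGroup H]
    {f : G →+ H} (hf : Function.Surjective f) : Nat.card G = Nat.card f.ker * Nat.card H := by
  simpa using f.card_preimage_of_surjective hf Set.univ

namespace ZMod

variable {c m N : ℕ}

theorem natCast_mul_eq_zero_iff (h : c * m = N) (hc : c ≠ 0) (a : ZMod N) :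
    (c : ZMod N) * a = 0 ↔ castHom (Dvd.intro_left c h) (ZMod m) a = 0 := by
  subst h
  rw [← intCast_zmod_cast a, map_intCast, ← Int.cast_natCast, ← Int.cast_mul,
    intCast_zmod_eq_zero_iff_dvd, intCast_zmod_eq_zero_iff_dvd, Nat.cast_mul]
  exact mul_dvd_mul_iff_left (by exact_mod_cast hc)

theorem val_natCast_mul_val [NeZero m] (h : c * m = N) (hc : c ≠ 0) (k : ZMod m) :
    ((c * k.val : ℕ) : ZMod N).val = c * k.val :=
  val_natCast_of_lt (h ▸ Nat.mul_lt_mul_of_pos_left k.val_lt (Nat.pos_of_ne_zero hc))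

theorem natCast_mul_val_injective [NeZero m] (h : c * m = N) (hc : c ≠ 0) :
    Function.Injective fun k : ZMod m ↦ ((c * k.val : ℕ) : ZMod N) := fun k l hkl ↦ by
  have hval := congrArg val hkl
  simp only [val_natCast_mul_val h hc] at hval
  exact val_injective m (Nat.eq_of_mul_eq_mul_left (Nat.pos_of_ne_zero hc) hval)

theorem exists_natCast_mul_val_eq [NeZero N] (h : c * m = N) {x : ZMod N} (hx : c ∣ x.val) :
    ∃ k : ZMod m, ((c * k.val : ℕ) : ZMod N) = x := by
  obtain ⟨j, hj⟩ := hx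
  have hjm : j < m := by
    have hx := x.val_lt
    rw [hj, ← h] at hx
    exact Nat.lt_of_mul_lt_mul_left hx
  exact ⟨j, by rw [val_natCast_of_lt hjm, ← hj, natCast_zmod_val]⟩

theorem dvd_val_of_sq_eq_sq_mul [NeZero N] (h : c ^ 2 ∣ N) {x w : ZMod N}
    (hx : x ^ 2 = (c : ZMod N) ^ 2 * w) : c ∣ x.val := by
  have hx' := congrArg (castHom h (ZMod (c ^ 2))) hx
  rw [← natCast_zmod_val x] at hx'
  simp only [map_pow, map_mul, map_natCast] at hx'
  rw [← Nat.cast_pow, ← Nat.cast_pow, natCast_self, zero_mul, natCast_eq_zero_iff] at hx'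
  exact (Nat.pow_dvd_pow_iff two_ne_zero).mp hx'

theorem sq_mul_mul_sub_sq_eq_iff (h : c ^ 2 * m = N) (hc : c ≠ 0) (y z : ZMod N) (k : ℕ)
    (n : ℤ) :
    (c : ZMod N) ^ 2 * y * z - ((c * k : ℕ) : ZMod N) ^ 2 = ((c ^ 2 * n : ℤ) : ZMod N) ↔
      castHom (Dvd.intro_left _ h) (ZMod m) y * castHom (Dvd.intro_left _ h) (ZMod m) z -
        (k : ZMod m) ^ 2 = n := by
  have hfactor : (c : ZMod N) ^ 2 * y * z - ((c * k : ℕ) : ZMod N) ^ 2 -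
      ((c ^ 2 * n : ℤ) : ZMod N) = ((c ^ 2 : ℕ) : ZMod N) * (y * z - k ^ 2 - n) := by
    push_cast
    ring
  rw [← sub_eq_zero, hfactor, natCast_mul_eq_zero_iff h (pow_ne_zero 2 hc)]
  simp only [map_sub, map_mul, map_pow, map_natCast, map_intCast, sub_eq_zero]

end ZMod

open ZMod in
theorem card_sq_mul_mul_sub_sq_eq (c m : ℕ) [NeZero c] [NeZero m] (n : ℤ) :
    Nat.card {v : ZMod (c ^ 2 * m) × ZMod (c ^ 2 * m) × ZMod (c ^ 2 * m) |
      (c : ZMod (c ^ 2 * m)) ^ 2 * v.2.1 * v.2.2 - v.1 ^ 2 = ((c ^ 2 * n : ℤ) : ZMod (c ^ 2 * m))} =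
    c ^ 5 * Nat.card {w : ZMod m × ZMod m × ZMod m | w.2.1 * w.2.2 - w.1 ^ 2 = (n : ZMod m)} := by
  have hc : c ≠ 0 := NeZero.ne c
  have hcm : c * (c * m) = c ^ 2 * m := by ring
  set S₁ := {w : ZMod m × ZMod m × ZMod m | w.2.1 * w.2.2 - w.1 ^ 2 = (n : ZMod m)}
  set S₂ := {v : ZMod (c ^ 2 * m) × ZMod (c ^ 2 * m) × ZMod (c ^ 2 * m) |
    (c : ZMod (c ^ 2 * m)) ^ 2 * v.2.1 * v.2.2 - v.1 ^ 2 = ((c ^ 2 * n : ℤ) : ZMod (c ^ 2 * m))}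
  let ψ : ZMod (c * m) × ZMod (c ^ 2 * m) × ZMod (c ^ 2 * m) →+ ZMod m × ZMod m × ZMod m :=
    ((castHom (dvd_mul_left m c) (ZMod m)).prodMap ((castHom (dvd_mul_left m _) (ZMod m)).prodMap
      (castHom (dvd_mul_left m _) (ZMod m)))).toAddMonoidHom
  have hψ : Function.Surjective ψ := (castHom_surjective (dvd_mul_left m c)).prodMap
    ((castHom_surjective (dvd_mul_left m _)).prodMap (castHom_surjective (dvd_mul_left m _)))
  let φ := Prod.map (fun k : ZMod (c * m) ↦ ((c * k.val : ℕ) : ZMod (c ^ 2 * m)))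
    (id : ZMod (c ^ 2 * m) × ZMod (c ^ 2 * m) → _)
  have hφ : Function.Injective φ := (natCast_mul_val_injective hcm hc).prodMap Function.injective_id
  have hmem : ∀ g, φ g ∈ S₂ ↔ ψ g ∈ S₁ := by
    rintro ⟨k, y, z⟩
    change (c : ZMod (c ^ 2 * m)) ^ 2 * y * z - ((c * k.val : ℕ) : ZMod (c ^ 2 * m)) ^ 2 = _ ↔
      castHom (dvd_mul_left m _) (ZMod m) y * castHom (dvd_mul_left m _) (ZMod m) z -
        castHom (dvd_mul_left m c) (ZMod m) k ^ 2 = _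
    rw [sq_mul_mul_sub_sq_eq_iff rfl hc, castHom_apply k, cast_eq_val]
  have hS : S₂ = φ '' (ψ ⁻¹' S₁) := by
    ext v
    refine ⟨fun hv ↦ ?_, ?_⟩
    · have hsq : v.1 ^ 2 = (c : ZMod (c ^ 2 * m)) ^ 2 * (v.2.1 * v.2.2 - n) := by
        simp only [S₂, Set.mem_ofPred_eq, Int.cast_mul, Int.cast_pow, Int.cast_natCast] at hv
        linear_combination -hv
      obtain ⟨k, hk⟩ :=
        exists_natCast_mul_val_eq hcm (dvd_val_of_sq_eq_sq_mul (dvd_mul_right _ m) hsq)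
      have hφk : φ (k, v.2) = v := Prod.ext hk rfl
      exact ⟨(k, v.2), (hmem _).1 (hφk ▸ hv), hφk⟩
    · rintro ⟨g, hg, rfl⟩
      exact (hmem g).2 hg
  have hker : Nat.card ψ.ker = c ^ 5 := by
    have hcard := AddMonoidHom.card_eq_card_ker_mul_of_surjective hψ
    simp only [Nat.card_prod, Nat.card_zmod] at hcard
    apply Nat.eq_of_mul_eq_mul_right (pow_pos (Nat.pos_of_ne_zero (NeZero.ne m)) 3)
    linear_combination hcard.symm
  rw [hS, Nat.card_image_of_injective hφ, AddMonoidHom.card_preimage_of_surjective hψ, hker]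

theorem dyadic_count_scaling (t : ℕ) (ht : 2 ≤ t) (n : ℤ) :
    cntG2 t (4 * n) = 32 * cntG1 (t - 2) n := by
  obtain ⟨s, rfl⟩ := Nat.exists_eq_add_of_le' ht
  rw [cntG2, cntG1, Nat.add_sub_cancel, show 2 ^ (s + 2) = 2 ^ 2 * 2 ^ s by ring]
  convert card_sq_mul_mul_sub_sq_eq 2 (2 ^ s) n using 4 <;> norm_num
end

section
/- For every integer t ≥ 2 and every integer n, the number of triples (x,y,z) ∈ (ℤ/2^tℤ)³ with x² + y² + z² = 4n equals 8 times the number of triples (x,y,z) ∈ (ℤ/2^{t−2}ℤ)³ with x² + y² + z² = n. -/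
/-- The number of solutions `(x,y,z)` in `ℤ/2^tℤ` of `x² + y² + z² = n`. -/
noncomputable def cntS (t : ℕ) (n : ℤ) : ℕ :=
  Nat.card {v : ZMod (2 ^ t) × ZMod (2 ^ t) × ZMod (2 ^ t) |
    v.1 ^ 2 + v.2.1 ^ 2 + v.2.2 ^ 2 = (n : ZMod (2 ^ t))}

/-!
Squares are `0` or `1` modulo `4`, so a solution of `x² + y² + z² = 4n` modulo `4m` has
`x, y, z` all even.  Writing `x = 2u` with `u` modulo `2m` (uniquely), the equation becomes
`u² + v² + w² ≡ n (mod m)`, and each solution modulo `m` lifts to exactly `2³ = 8` triples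
modulo `2m`.
-/

theorem AddMonoidHom.card_preimage_mul_card_of_surjective {G H : Type*} [AddGroup G]
    [AddGroup H] (f : G →+ H) (hf : Function.Surjective f) (S : Set H) :
    Nat.card (f ⁻¹' S) * Nat.card H = Nat.card G * Nat.card S := by
  let e := QuotientAddGroup.quotientKerEquivOfSurjective f hf
  have hpre : f ⁻¹' S = QuotientAddGroup.mk ⁻¹' (e ⁻¹' S) := rfl
  rw [hpre, Nat.card_congr (QuotientAddGroup.preimageMkEquivAddSubgroupProdSet _ _),
    Nat.card_prod, Nat.card_preimage_of_injective e.injective (by simp [e.surjective.range_eq]),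
    ← Nat.card_congr e.toEquiv, AddSubgroup.card_eq_card_quotient_mul_card_addSubgroup f.ker]
  ring

theorem ZMod.intCast_mul_eq_intCast_mul_iff {k : ℕ} (hk : k ≠ 0) (m : ℕ) (a b : ℤ) :
    ((k * a : ℤ) : ZMod (k * m)) = ((k * b : ℤ) : ZMod (k * m)) ↔ (a : ZMod m) = b := by
  rw [ZMod.intCast_eq_intCast_iff_dvd_sub, ZMod.intCast_eq_intCast_iff_dvd_sub, ← mul_sub,
    Nat.cast_mul]
  exact mul_dvd_mul_iff_left (by exact_mod_cast hk)

def threeSqSolutions (N : ℕ) (n : ℤ) : Set (ZMod N × ZMod N × ZMod N) :=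
  {v | v.1 ^ 2 + v.2.1 ^ 2 + v.2.2 ^ 2 = (n : ZMod N)}

namespace ThreeSquares

def doubleCast (m : ℕ) (u : ZMod (2 * m)) : ZMod (4 * m) := ((2 * u.val : ℕ) : ZMod (4 * m))

abbrev reduce (m : ℕ) : ZMod (2 * m) →+* ZMod m := ZMod.castHom (dvd_mul_left m 2) (ZMod m)

abbrev reduce₃ (m : ℕ) :
    ZMod (2 * m) × ZMod (2 * m) × ZMod (2 * m) →+* ZMod m × ZMod m × ZMod m :=
  (reduce m).prodMap ((reduce m).prodMap (reduce m))

theorem reduce₃_surjective (m : ℕ) : Function.Surjective (reduce₃ m) := by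
  have h := ZMod.castHom_surjective (dvd_mul_left m 2)
  exact h.prodMap (h.prodMap h)

variable {m : ℕ} [NeZero m]

theorem val_doubleCast (u : ZMod (2 * m)) : (doubleCast m u).val = 2 * u.val := by
  have := u.val_lt
  rw [doubleCast, ZMod.val_natCast, Nat.mod_eq_of_lt (by omega)]

theorem doubleCast_injective : Function.Injective (doubleCast m) := fun u v h =>
  ZMod.val_injective _ (by simpa [val_doubleCast] using congrArg ZMod.val h)

theorem exists_doubleCast_eq {x : ZMod (4 * m)} (hx : 2 ∣ x.val) : ∃ u, doubleCast m u = x := by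
  obtain ⟨k, hk⟩ := hx
  have := x.val_lt
  refine ⟨k, ZMod.val_injective _ ?_⟩
  rw [val_doubleCast, ZMod.val_natCast, Nat.mod_eq_of_lt (by omega), hk]

theorem two_dvd_val_of_sq_add_sq_add_sq_eq {x y z : ZMod (4 * m)} {n : ℤ}
    (h : x ^ 2 + y ^ 2 + z ^ 2 = ((4 * n : ℤ) : ZMod (4 * m))) : 2 ∣ x.val := by
  have mod_four : ∀ a b c : ZMod 4, a ^ 2 + b ^ 2 + c ^ 2 = 0 → 2 ∣ a.val := by decide
  let φ := ZMod.castHom (dvd_mul_right 4 m) (ZMod 4)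
  have h4 : φ x ^ 2 + φ y ^ 2 + φ z ^ 2 = 0 := by
    have := congrArg φ h
    simp only [map_add, map_pow, Int.cast_mul] at this
    rw [this, map_mul, map_intCast, show ((4 : ℤ) : ZMod 4) = 0 from rfl, zero_mul]
  have hval : (φ x).val = x.val % 4 := by
    rw [ZMod.castHom_apply, ZMod.cast_eq_val, ZMod.val_natCast]
  have := mod_four _ _ _ h4
  omega

theorem doubleCast_sq_add_sq_add_sq_eq_iff (u v w : ZMod (2 * m)) (n : ℤ) :
    doubleCast m u ^ 2 + doubleCast m v ^ 2 + doubleCast m w ^ 2 =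
        ((4 * n : ℤ) : ZMod (4 * m)) ↔
      reduce m u ^ 2 + reduce m v ^ 2 + reduce m w ^ 2 = (n : ZMod m) := by
  have hlhs : doubleCast m u ^ 2 + doubleCast m v ^ 2 + doubleCast m w ^ 2 =
      ((4 * ((u.val : ℤ) ^ 2 + (v.val : ℤ) ^ 2 + (w.val : ℤ) ^ 2) : ℤ) : ZMod (4 * m)) := by
    push_cast [doubleCast]
    ring
  have hreduce (x : ZMod (2 * m)) : ((x.val : ℕ) : ZMod m) = reduce m x := by
    rw [ZMod.castHom_apply, ZMod.cast_eq_val]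
  rw [hlhs]
  refine (ZMod.intCast_mul_eq_intCast_mul_iff (k := 4) four_ne_zero m _ _).trans ?_
  push_cast
  rw [hreduce, hreduce, hreduce]

theorem threeSqSolutions_four_mul_eq_image (n : ℤ) :
    threeSqSolutions (4 * m) (4 * n) =
      Prod.map (doubleCast m) (Prod.map (doubleCast m) (doubleCast m)) ''
        (reduce₃ m ⁻¹' threeSqSolutions m n) := by
  ext ⟨x, y, z⟩
  simp only [threeSqSolutions, Set.mem_ofPred_eq, Set.mem_image, Set.mem_preimage, Prod.exists,
    RingHom.coe_prodMap, Prod.map, Prod.mk.injEq]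
  constructor
  · intro h
    obtain ⟨u, rfl⟩ := exists_doubleCast_eq (two_dvd_val_of_sq_add_sq_add_sq_eq h)
    obtain ⟨v, rfl⟩ := exists_doubleCast_eq (two_dvd_val_of_sq_add_sq_add_sq_eq
      (x := y) (y := doubleCast m u) (z := z) (by rw [← h]; ring))
    obtain ⟨w, rfl⟩ := exists_doubleCast_eq (two_dvd_val_of_sq_add_sq_add_sq_eq
      (x := z) (y := doubleCast m u) (z := doubleCast m v) (by rw [← h]; ring))
    exact ⟨u, v, w, (doubleCast_sq_add_sq_add_sq_eq_iff u v w n).mp h, rfl, rfl, rfl⟩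
  · rintro ⟨u, v, w, h, rfl, rfl, rfl⟩
    exact (doubleCast_sq_add_sq_add_sq_eq_iff u v w n).mpr h

end ThreeSquares

open ThreeSquares in
theorem card_threeSqSolutions_four_mul (m : ℕ) [NeZero m] (n : ℤ) :
    Nat.card (threeSqSolutions (4 * m) (4 * n)) = 8 * Nat.card (threeSqSolutions m n) := by
  have hfiber := (reduce₃ m).toAddMonoidHom.card_preimage_mul_card_of_surjective
    (reduce₃_surjective m) (threeSqSolutions m n)
  simp only [Nat.card_prod, Nat.card_zmod] at hfiber
  rw [threeSqSolutions_four_mul_eq_image, Nat.card_image_of_injective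
    (doubleCast_injective.prodMap (doubleCast_injective.prodMap doubleCast_injective))]
  have hm : 0 < m * (m * m) := by have := NeZero.pos m; positivity
  apply Nat.eq_of_mul_eq_mul_right hm
  calc _ = 2 * m * (2 * m * (2 * m)) * Nat.card (threeSqSolutions m n) := hfiber
    _ = _ := by ring

theorem dyadic_three_squares_scaling (t : ℕ) (ht : 2 ≤ t) (n : ℤ) :
    cntS t (4 * n) = 8 * cntS (t - 2) n := by
  obtain ⟨s, rfl⟩ : ∃ s, t = s + 2 := ⟨t - 2, by omega⟩
  change Nat.card (threeSqSolutions (2 ^ (s + 2)) (4 * n)) =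
    8 * Nat.card (threeSqSolutions (2 ^ (s + 2 - 2)) n)
  rw [Nat.add_sub_cancel, show 2 ^ (s + 2) = 4 * 2 ^ s by ring]
  exact card_threeSqSolutions_four_mul (2 ^ s) n
end

section
/- Let a, b, c, d, e, f be integers with a and d odd and e and f even. Then for every triple (x,y,z) ∈ ℤ³, the following four conditions hold simultaneously — a·x² + b·y² + c·z² + d·yz + e·zx + f·xy ≡ 0 (mod 4), 2a·x + f·y + e·z ≡ 0 (mod 4), f·x + 2b·y + d·z ≡ 0 (mod 4), and e·x + d·y + 2c·z ≡ 0 (mod 4) — if and only if x ≡ 0 (mod 2), y ≡ 0 (mod 4), and z ≡ 0 (mod 4). -/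
/-
Reduce mod 2 first. Since f and e are even and d is odd, the third and fourth congruences force z and y
to be even; the form is then ≡ a x² (mod 2), so x is even as well. With x and y even, the terms f x and
2b y of the third congruence vanish mod 4, leaving d z ≡ 0 (mod 4), hence z ≡ 0 since d is a unit mod 4;
symmetrically the fourth congruence gives y ≡ 0 (mod 4). The converse is a direct substitution.
-/

theorem Int.isCoprime_two_pow_left_of_odd {d : ℤ} (n : ℕ) (hd : Odd d) : IsCoprime (2 ^ n) d :=
  (Int.isCoprime_two_left.mpr hd).pow_left

section

variable {a b c d e f x y z : ℤ}

theorem two_dvd_of_two_dvd_gram_row (hd : Odd d) (hf : Even f)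
    (h : 2 ∣ f * x + 2 * b * y + d * z) : 2 ∣ z := by
  have hfx : 2 ∣ f * x := dvd_mul_of_dvd_left hf.two_dvd x
  have hby : 2 ∣ 2 * b * y := dvd_mul_of_dvd_left (dvd_mul_right 2 b) y
  have hdz : 2 ∣ d * z := (dvd_add_right (dvd_add hfx hby)).mp h
  exact (Int.isCoprime_two_left.mpr hd).dvd_of_dvd_mul_left hdz

theorem four_dvd_of_four_dvd_gram_row (hd : Odd d) (hf : Even f) (hx : 2 ∣ x) (hy : 2 ∣ y)
    (h : 4 ∣ f * x + 2 * b * y + d * z) : 4 ∣ z := by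
  have hfx : 4 ∣ f * x := mul_dvd_mul hf.two_dvd hx
  have hby : 4 ∣ 2 * b * y := mul_dvd_mul (dvd_mul_right 2 b) hy
  have hdz : 4 ∣ d * z := (dvd_add_right (dvd_add hfx hby)).mp h
  exact (Int.isCoprime_two_pow_left_of_odd 2 hd).dvd_of_dvd_mul_left hdz

theorem two_dvd_of_two_dvd_form (ha : Odd a) (hy : 2 ∣ y) (hz : 2 ∣ z)
    (h : 2 ∣ a * x ^ 2 + b * y ^ 2 + c * z ^ 2 + d * y * z + e * z * x + f * x * y) : 2 ∣ x := by
  simp only [← even_iff_two_dvd] at *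
  simpa [Int.even_add, Int.even_mul, Int.even_pow, hy, hz, Int.not_even_iff_odd.mpr ha] using h

end

theorem watson_lattice_characterization (a b c d e f : ℤ) (ha : Odd a)
    (hd : Odd d) (he : Even e) (hf : Even f) (x y z : ℤ) :
    ((4 : ℤ) ∣ (a * x ^ 2 + b * y ^ 2 + c * z ^ 2 + d * y * z + e * z * x + f * x * y) ∧
     (4 : ℤ) ∣ (2 * a * x + f * y + e * z) ∧
     (4 : ℤ) ∣ (f * x + 2 * b * y + d * z) ∧
     (4 : ℤ) ∣ (e * x + d * y + 2 * c * z)) ↔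
    ((2 : ℤ) ∣ x ∧ (4 : ℤ) ∣ y ∧ (4 : ℤ) ∣ z) := by
  have two_dvd_of_four_dvd {m : ℤ} (h : 4 ∣ m) : 2 ∣ m := dvd_trans (by norm_num) h
  constructor
  · rintro ⟨hg, -, hz4, hy4⟩
    rw [add_right_comm] at hy4
    have hz := two_dvd_of_two_dvd_gram_row hd hf (two_dvd_of_four_dvd hz4)
    have hy := two_dvd_of_two_dvd_gram_row hd he (two_dvd_of_four_dvd hy4)
    have hx := two_dvd_of_two_dvd_form ha hy hz (two_dvd_of_four_dvd hg)
    exact ⟨hx, four_dvd_of_four_dvd_gram_row hd he hx hz hy4,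
      four_dvd_of_four_dvd_gram_row hd hf hx hy hz4⟩
  · rintro ⟨⟨X, rfl⟩, ⟨Y, rfl⟩, ⟨Z, rfl⟩⟩
    obtain ⟨E, rfl⟩ := he.two_dvd
    obtain ⟨F, rfl⟩ := hf.two_dvd
    exact ⟨⟨a * X ^ 2 + 4 * b * Y ^ 2 + 4 * c * Z ^ 2 + 4 * d * Y * Z + 4 * E * Z * X
        + 4 * F * X * Y, by ring⟩,
      ⟨a * X + 2 * F * Y + 2 * E * Z, by ring⟩,
      ⟨F * X + 2 * b * Y + d * Z, by ring⟩,
      ⟨E * X + d * Y + 2 * c * Z, by ring⟩⟩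
end
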